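/- arXiv:1807.02881 — 4 statements merged into one kernel-verified Lean document; each statement's English description precedes it below -/
import Mathlib

section
/- Suppose that I_i ∘ G_{n−1−i} ⊆ R ∘ F_B for every i = 0, 1, …, n−1. Then π : C → B is surjective with ker π = t·C (i.e. the sequence k → A → C → B → k is coexact), and C is a free extension of A = k[t]/(t^n) with fiber B; in particular C is a free A-module via ι. -/
/-!
Write `t = X none`, `F_m = ∑_{i<m} t^(m-1-i) G_i` (so `F = F_n`) and expand `s ∈ S` as
`∑ t^j c_j`. Then `s ∘ F_m = 0` iff `∑_{j≤d} c_j ∘ G_(d-j) = 0` for every `d < m`. The top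
coefficient `c_d` of a solution of the `d`-th equation lies in the iterated colon ideal `I_d`,
and the hypothesis `I_i ∘ G_(n-1-i) ⊆ R ∘ G_0` lets every solution of the first `m` equations
be completed to a solution of all `n` of them, i.e. to an element of `Ann F` agreeing with `s`
modulo `t^m`. Hence `s ∈ t^m C` as soon as its coefficients solve the first `m` equations.
For `m = 1` this is `ker π = tC`; applied to `s` with `t^j s ∈ Ann F`, i.e. `s ∘ F_(n-j) = 0`,
it gives `ann_C(t^j) ⊆ t^(n-j) C`. This exactness of the `t`-adic filtration makes lifts of a
`k`-basis of `C/tC` a basis of `C` over `A = k[t]/(t^n)`.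
-/

open MvPolynomial

noncomputable section

variable {k : Type*} [Field k]

open Classical in
/-- Contraction action of `g ∈ k[x_1,…]` on `F ∈ k[X_1,…]`: the monomial `x^a` sends
`X^b` to `X^(b-a)` if `a ≤ b` and to `0` otherwise, extended bilinearly. -/
def contract {σ : Type*} (g F : MvPolynomial σ k) : MvPolynomial σ k :=
  ∑ a ∈ g.support, ∑ b ∈ F.support,
    if a ≤ b then monomial (b - a) (g.coeff a * F.coeff b) else 0

/-- The annihilator `Ann(F) = {g : g ∘ F = 0}` (a set; it is in fact an ideal). -/
def annSet {σ : Type*} (F : MvPolynomial σ k) : Set (MvPolynomial σ k) :=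
  {g | contract g F = 0}

/-- The annihilator ideal of `F` (since `annSet F` is closed under the ideal operations,
the span coincides with it). -/
def annIdeal {σ : Type*} (F : MvPolynomial σ k) : Ideal (MvPolynomial σ k) :=
  Ideal.span (annSet F)

/-- `C` is a free module over `A` via the ring map `ι : A → C`. -/
def freeVia {A C : Type*} [CommRing A] [CommRing C] (ι : A →+* C) : Prop :=
  @Module.Free A C _ _ (Module.compHom C ι)


section Contraction

variable {σ : Type*}

theorem coeff_contract_of_support_subset (g F : MvPolynomial σ k) {s : Finset (σ →₀ ℕ)}
    (hs : g.support ⊆ s) (c : σ →₀ ℕ) :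
    coeff c (contract g F) = ∑ a ∈ s, g.coeff a * F.coeff (a + c) := by
  classical
  have hterm : ∀ a b : σ →₀ ℕ,
      coeff c (if a ≤ b then monomial (b - a) (g.coeff a * F.coeff b) else 0)
        = if b = a + c then g.coeff a * F.coeff b else 0 := by
    intro a b
    by_cases hab : a ≤ b
    · rw [if_pos hab, coeff_monomial]
      exact if_congr ⟨fun h => by rw [← h, add_tsub_cancel_of_le hab],
        fun h => by rw [h, add_tsub_cancel_left]⟩ rfl rfl
    · rw [if_neg hab, coeff_zero, if_neg fun (h : b = a + c) => hab (h ▸ le_self_add)]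
  rw [contract, coeff_sum]
  refine (Finset.sum_congr rfl fun a _ => ?_).trans
    (Finset.sum_subset hs fun a _ ha => by rw [notMem_support_iff.mp ha, zero_mul])
  simp_rw [coeff_sum, hterm, Finset.sum_ite_eq', mem_support_iff]
  split_ifs with h
  · rfl
  · rw [not_not.mp h, mul_zero]

theorem coeff_contract (g F : MvPolynomial σ k) (c : σ →₀ ℕ) :
    coeff c (contract g F) = ∑ a ∈ g.support, g.coeff a * F.coeff (a + c) :=
  coeff_contract_of_support_subset g F subset_rfl c

theorem contract_add_left (g g' F : MvPolynomial σ k) :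
    contract (g + g') F = contract g F + contract g' F := by
  classical
  ext c
  rw [coeff_add, coeff_contract_of_support_subset _ F support_add,
    coeff_contract_of_support_subset g F Finset.subset_union_left,
    coeff_contract_of_support_subset g' F Finset.subset_union_right, ← Finset.sum_add_distrib]
  simp only [coeff_add, add_mul]

theorem contract_add_right (g F F' : MvPolynomial σ k) :
    contract g (F + F') = contract g F + contract g F' := by
  ext c
  simp only [coeff_add, coeff_contract, mul_add, Finset.sum_add_distrib]

theorem contract_zero_left (F : MvPolynomial σ k) : contract 0 F = 0 :=
  (AddMonoidHom.mk' (contract · F) (contract_add_left · · F)).map_zero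

theorem contract_zero_right (g : MvPolynomial σ k) : contract g 0 = 0 :=
  (AddMonoidHom.mk' (contract g) (contract_add_right g)).map_zero

theorem contract_neg_left (g F : MvPolynomial σ k) : contract (-g) F = -contract g F :=
  (AddMonoidHom.mk' (contract · F) (contract_add_left · · F)).map_neg g

theorem contract_neg_right (g F : MvPolynomial σ k) : contract g (-F) = -contract g F :=
  (AddMonoidHom.mk' (contract g) (contract_add_right g)).map_neg F

theorem contract_sum_left {α : Type*} (s : Finset α) (f : α → MvPolynomial σ k)
    (F : MvPolynomial σ k) : contract (∑ i ∈ s, f i) F = ∑ i ∈ s, contract (f i) F :=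
  map_sum (AddMonoidHom.mk' (contract · F) (contract_add_left · · F)) f s

theorem contract_sum_right {α : Type*} (g : MvPolynomial σ k) (s : Finset α)
    (f : α → MvPolynomial σ k) : contract g (∑ i ∈ s, f i) = ∑ i ∈ s, contract g (f i) :=
  map_sum (AddMonoidHom.mk' (contract g) (contract_add_right g)) f s

theorem coeff_contract_monomial (a : σ →₀ ℕ) (v : k) (F : MvPolynomial σ k) (c : σ →₀ ℕ) :
    coeff c (contract (monomial a v) F) = v * F.coeff (a + c) := by
  classical
  rw [coeff_contract_of_support_subset _ F support_monomial_subset, Finset.sum_singleton,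
    coeff_monomial, if_pos rfl]

theorem contract_monomial_monomial (a b : σ →₀ ℕ) (u v : k) :
    contract (monomial a u) (monomial b v)
      = if a ≤ b then monomial (b - a) (u * v) else 0 := by
  classical
  ext c
  rw [coeff_contract_monomial]
  by_cases hab : a ≤ b
  · rw [if_pos hab, coeff_monomial, coeff_monomial, mul_ite, mul_zero]
    exact if_congr ⟨fun h => by rw [h, add_tsub_cancel_left],
      fun h => by rw [← h, add_tsub_cancel_of_le hab]⟩ rfl rfl
  · rw [if_neg hab, coeff_monomial, coeff_zero,
      if_neg fun (h : b = a + c) => hab (h ▸ le_self_add), mul_zero]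

theorem contract_one_left (F : MvPolynomial σ k) : contract 1 F = F := by
  ext c
  rw [← C_1, C_apply, coeff_contract_monomial, one_mul, zero_add]

theorem contract_mul (p q F : MvPolynomial σ k) :
    contract (p * q) F = contract p (contract q F) := by
  induction p using MvPolynomial.induction_on' with
  | add p₁ p₂ h₁ h₂ => rw [add_mul, contract_add_left, h₁, h₂, contract_add_left]
  | monomial a u =>
    induction q using MvPolynomial.induction_on' with
    | add q₁ q₂ h₁ h₂ =>
      rw [mul_add, contract_add_left, h₁, h₂, contract_add_left, contract_add_right]
    | monomial b v =>
      ext c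
      rw [monomial_mul, coeff_contract_monomial, coeff_contract_monomial,
        coeff_contract_monomial, add_comm a b, add_assoc, mul_assoc]

theorem mem_annIdeal_iff {F g : MvPolynomial σ k} : g ∈ annIdeal F ↔ contract g F = 0 := by
  refine ⟨fun hg => ?_, fun h => Ideal.subset_span h⟩
  let J : Ideal (MvPolynomial σ k) :=
    { carrier := annSet F
      zero_mem' := contract_zero_left F
      add_mem' := fun {a b} ha hb => by
        change contract (a + b) F = 0
        rw [contract_add_left, ha.out, hb.out, add_zero]
      smul_mem' := fun c x hx => by
        change contract (c * x) F = 0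
        rw [contract_mul, hx.out, contract_zero_right] }
  exact (Ideal.span_le.mpr fun _ hx => hx : annIdeal F ≤ J) hg

end Contraction

section TGrading

variable {σ : Type*}

open Finsupp in
theorem single_none_add_mapDomain_some_le_iff (j a : ℕ) (u v : σ →₀ ℕ) :
    single none j + u.mapDomain some ≤ single none a + v.mapDomain some ↔ j ≤ a ∧ u ≤ v := by
  simp [Finsupp.le_def, Option.forall, mapDomain_apply (Option.some_injective _),
    mapDomain_of_notMem_range]

open Finsupp in
theorem single_none_add_mapDomain_some_sub (j a : ℕ) (u v : σ →₀ ℕ) :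
    single none a + v.mapDomain some - (single none j + u.mapDomain some)
      = single none (a - j) + (v - u).mapDomain some := by
  ext o
  cases o <;> simp [mapDomain_apply (Option.some_injective _), mapDomain_of_notMem_range]

theorem X_none_pow_mul_rename_monomial (j : ℕ) (u : σ →₀ ℕ) (c : k) :
    (X none : MvPolynomial (Option σ) k) ^ j * rename some (monomial u c)
      = monomial (Finsupp.single none j + u.mapDomain some) c := by
  rw [rename_monomial, X_pow_eq_monomial, monomial_mul, one_mul]

theorem contract_X_none_pow_mul_rename (j a : ℕ) (g G : MvPolynomial σ k) :
    contract ((X none : MvPolynomial (Option σ) k) ^ j * rename some g)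
        (X none ^ a * rename some G)
      = if j ≤ a then X none ^ (a - j) * rename some (contract g G) else 0 := by
  induction g using MvPolynomial.induction_on' with
  | add g₁ g₂ h₁ h₂ =>
    simp only [map_add, mul_add, contract_add_left, h₁, h₂]
    split_ifs <;> simp
  | monomial u c =>
    induction G using MvPolynomial.induction_on' with
    | add G₁ G₂ h₁ h₂ =>
      simp only [map_add, mul_add, contract_add_right, h₁, h₂]
      split_ifs <;> simp
    | monomial v d =>
      simp only [X_none_pow_mul_rename_monomial, contract_monomial_monomial,
        single_none_add_mapDomain_some_le_iff, single_none_add_mapDomain_some_sub]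
      by_cases hja : j ≤ a <;> by_cases huv : u ≤ v <;>
        simp [hja, huv, X_none_pow_mul_rename_monomial]

theorem contract_X_none_pow (j a : ℕ) (G : MvPolynomial σ k) :
    contract ((X none : MvPolynomial (Option σ) k) ^ j) (X none ^ a * rename some G)
      = if j ≤ a then X none ^ (a - j) * rename some G else 0 := by
  have h := contract_X_none_pow_mul_rename j a 1 G
  rwa [map_one, mul_one, contract_one_left] at h

end TGrading

section TExpansion

variable {σ : Type*}

def tSum (N : ℕ) (c : ℕ → MvPolynomial σ k) : MvPolynomial (Option σ) k :=
  ∑ j ∈ Finset.range N, X none ^ j * rename some (c j)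

def dualForm (G : ℕ → MvPolynomial σ k) (m : ℕ) : MvPolynomial (Option σ) k :=
  ∑ i ∈ Finset.range m, X none ^ (m - 1 - i) * rename some (G i)

def contractConv (c G : ℕ → MvPolynomial σ k) (d : ℕ) : MvPolynomial σ k :=
  ∑ j ∈ Finset.range (d + 1), contract (c j) (G (d - j))

def tCoeff (s : MvPolynomial (Option σ) k) (j : ℕ) : MvPolynomial σ k :=
  (optionEquivLeft k σ s).coeff j

theorem optionEquivLeft_tSum (N : ℕ) (c : ℕ → MvPolynomial σ k) :
    optionEquivLeft k σ (tSum N c) = ∑ j ∈ Finset.range N, Polynomial.monomial j (c j) := by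
  have hrename : ∀ p : MvPolynomial σ k, optionEquivLeft k σ (rename some p) = Polynomial.C p :=
    fun p => by
      induction p using MvPolynomial.induction_on with
      | C a => rw [rename_C, optionEquivLeft_C]
      | add p q hp hq => rw [map_add, map_add, hp, hq, Polynomial.C_add]
      | mul_X p i hp =>
        rw [map_mul, map_mul, hp, rename_X, optionEquivLeft_X_some, Polynomial.C_mul]
  simp only [tSum, map_sum, map_mul, map_pow, optionEquivLeft_X_none, hrename,
    ← Polynomial.C_mul_X_pow_eq_monomial, mul_comm]

theorem eq_zero_of_tSum_eq_zero {N : ℕ} {c : ℕ → MvPolynomial σ k} (h : tSum N c = 0) :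
    ∀ j < N, c j = 0 := by
  intro j hj
  have := congrArg (fun p => Polynomial.coeff (optionEquivLeft k σ p) j) h
  simpa [optionEquivLeft_tSum, Polynomial.finsetSum_coeff, Polynomial.coeff_monomial, hj]
    using this

theorem tSum_tCoeff {N : ℕ} {s : MvPolynomial (Option σ) k}
    (hN : (optionEquivLeft k σ s).natDegree < N) : tSum N (tCoeff s) = s :=
  (optionEquivLeft k σ).injective <| by
    rw [optionEquivLeft_tSum]
    exact ((optionEquivLeft k σ s).as_sum_range' N hN).symm

theorem aeval_elim_rename_some (p : MvPolynomial σ k) :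
    aeval (fun o : Option σ => o.elim (0 : MvPolynomial σ k) X) (rename some p) = p := by
  rw [aeval_rename]
  exact aeval_X_left_apply p

theorem aeval_elim_tSum {N : ℕ} (hN : 1 ≤ N) (c : ℕ → MvPolynomial σ k) :
    aeval (fun o : Option σ => o.elim (0 : MvPolynomial σ k) X) (tSum N c) = c 0 := by
  have hX : aeval (fun o : Option σ => o.elim (0 : MvPolynomial σ k) X)
      (X none : MvPolynomial (Option σ) k) = 0 := aeval_X _ _
  rw [tSum, map_sum, Finset.sum_eq_single_of_mem 0 (Finset.mem_range.mpr hN)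
    fun j _ hj => by rw [map_mul, map_pow, hX, zero_pow hj, zero_mul]]
  rw [map_mul, aeval_elim_rename_some, pow_zero, map_one, one_mul]

theorem tSum_sub_tSum_mem_span {m M : ℕ} (h : m ≤ M) (c : ℕ → MvPolynomial σ k) :
    tSum M c - tSum m c ∈ Ideal.span {(X none : MvPolynomial (Option σ) k) ^ m} := by
  rw [tSum, tSum, Finset.sum_range_sub_sum_range h]
  refine Ideal.sum_mem _ fun j hj => Ideal.mem_span_singleton.mpr ?_
  exact dvd_mul_of_dvd_left (pow_dvd_pow _ (Finset.mem_filter.mp hj).2) _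

theorem dualForm_eq_tSum (H : ℕ → MvPolynomial σ k) (m : ℕ) :
    dualForm H m = tSum m fun e => H (m - 1 - e) := by
  rw [dualForm, tSum, ← Finset.sum_range_reflect]
  refine Finset.sum_congr rfl fun e he => ?_
  rw [show m - 1 - (m - 1 - e) = e by have := Finset.mem_range.mp he; omega]

theorem eq_zero_of_dualForm_eq_zero {m : ℕ} {H : ℕ → MvPolynomial σ k} (h : dualForm H m = 0) :
    ∀ d < m, H d = 0 := by
  intro d hd
  rw [dualForm_eq_tSum] at h
  simpa [show m - 1 - (m - 1 - d) = d by omega] using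
    eq_zero_of_tSum_eq_zero h (m - 1 - d) (by omega)

theorem dualForm_congr {m : ℕ} {H H' : ℕ → MvPolynomial σ k} (h : ∀ d < m, H d = H' d) :
    dualForm H m = dualForm H' m :=
  Finset.sum_congr rfl fun d hd => by rw [h d (Finset.mem_range.mp hd)]

theorem dualForm_sum {α : Type*} (s : Finset α) (H : α → ℕ → MvPolynomial σ k) (m : ℕ) :
    dualForm (fun d => ∑ a ∈ s, H a d) m = ∑ a ∈ s, dualForm (H a) m := by
  simp only [dualForm, map_sum, Finset.mul_sum]
  exact Finset.sum_comm

theorem dualForm_sub (H : ℕ → MvPolynomial σ k) (m j : ℕ) :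
    dualForm H (m - j) = dualForm (fun d => if j ≤ d then H (d - j) else 0) m := by
  have hlow : ∀ e d : ℕ, d < j → (X none : MvPolynomial (Option σ) k) ^ e
      * rename some (if j ≤ d then H (d - j) else 0) = 0 := fun e d hd => by
    rw [if_neg (by omega), map_zero, mul_zero]
  rcases le_or_gt j m with hjm | hmj
  · obtain ⟨l, rfl⟩ := Nat.exists_eq_add_of_le hjm
    rw [dualForm, dualForm, Finset.sum_range_add,
      Finset.sum_eq_zero fun d hd => hlow _ d (Finset.mem_range.mp hd), zero_add,
      Nat.add_sub_cancel_left]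
    refine Finset.sum_congr rfl fun x _ => ?_
    rw [if_pos (Nat.le_add_right j x), Nat.add_sub_cancel_left,
      show j + l - 1 - (j + x) = l - 1 - x by omega]
  · rw [Nat.sub_eq_zero_of_le hmj.le, dualForm, Finset.sum_range_zero, dualForm,
      Finset.sum_eq_zero fun d hd => hlow _ d (by have := Finset.mem_range.mp hd; omega)]

theorem contract_X_none_pow_dualForm (G : ℕ → MvPolynomial σ k) (j m : ℕ) :
    contract ((X none : MvPolynomial (Option σ) k) ^ j) (dualForm G m) = dualForm G (m - j) := by
  rw [dualForm, contract_sum_right, dualForm]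
  simp only [contract_X_none_pow]
  rw [← Finset.sum_subset (Finset.range_subset_range.mpr (Nat.sub_le m j))
    fun i hi hni => by
      simp only [Finset.mem_range, not_lt] at hi hni
      rw [if_neg (by omega)]]
  refine Finset.sum_congr rfl fun i hi => ?_
  have := Finset.mem_range.mp hi
  rw [if_pos (by omega), show m - 1 - i - j = m - j - 1 - i by omega]

theorem contract_rename_dualForm (g : MvPolynomial σ k) (G : ℕ → MvPolynomial σ k) (m : ℕ) :
    contract (rename some g) (dualForm G m) = dualForm (fun i => contract g (G i)) m := by
  simp only [dualForm, contract_sum_right]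
  refine Finset.sum_congr rfl fun i _ => ?_
  simpa using contract_X_none_pow_mul_rename 0 (m - 1 - i) g (G i)

theorem contract_tSum_dualForm {N m : ℕ} (hm : m ≤ N) (c G : ℕ → MvPolynomial σ k) :
    contract (tSum N c) (dualForm G m) = dualForm (contractConv c G) m := by
  have hconv : ∀ d < m, contractConv c G d
      = ∑ j ∈ Finset.range N, if j ≤ d then contract (c j) (G (d - j)) else 0 := by
    intro d hd
    rw [← Finset.sum_filter, contractConv]
    congr 1
    ext j
    simp only [Finset.mem_range, Finset.mem_filter]
    omega
  rw [dualForm_congr hconv, dualForm_sum, tSum, contract_sum_left]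
  refine Finset.sum_congr rfl fun j _ => ?_
  rw [contract_mul, contract_rename_dualForm, contract_X_none_pow_dualForm, dualForm_sub]

theorem contract_tSum_dualForm_eq_zero_iff {N m : ℕ} (hm : m ≤ N) (c G : ℕ → MvPolynomial σ k) :
    contract (tSum N c) (dualForm G m) = 0 ↔ ∀ d < m, contractConv c G d = 0 := by
  rw [contract_tSum_dualForm hm]
  refine ⟨eq_zero_of_dualForm_eq_zero, fun h => Finset.sum_eq_zero fun d hd => ?_⟩
  rw [h d (Finset.mem_range.mp hd), map_zero, mul_zero]

end TExpansion

section ColonIdeals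

variable {σ : Type*} {G : ℕ → MvPolynomial σ k} {I : ℕ → Ideal (MvPolynomial σ k)}

theorem mem_of_forall_contract_mul_prod_eq_zero (hI0 : I 0 = annIdeal (G 0))
    (hIsucc : ∀ i, I (i + 1) = (I i).colon (annIdeal (G (i + 1)))) {d : ℕ}
    {f : MvPolynomial σ k}
    (h : ∀ a : Fin d → MvPolynomial σ k, (∀ i, contract (a i) (G (i + 1)) = 0) →
      contract (f * ∏ i, a i) (G 0) = 0) :
    f ∈ I d := by
  induction d generalizing f with
  | zero => simpa [hI0, mem_annIdeal_iff] using h Fin.elim0 fun i => i.elim0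
  | succ d ih =>
    rw [hIsucc d]
    refine Submodule.mem_colon.mpr fun p hp => ih fun a ha => ?_
    have hsnoc := h (Fin.snoc a p) <| Fin.lastCases (by simpa using mem_annIdeal_iff.mp hp)
      fun i => by simpa using ha i
    rw [Fin.prod_snoc] at hsnoc
    rwa [smul_eq_mul, mul_right_comm, mul_assoc]

theorem monotone_of_colon (hIsucc : ∀ i, I (i + 1) = (I i).colon (annIdeal (G (i + 1)))) :
    Monotone I :=
  monotone_nat_of_le_succ fun i => (hIsucc i).symm ▸ Ideal.le_colon

/-- `c_d ∘ G_0 = -∑_{j<d} c_j ∘ G_(d-j)`, and each `a_i` with `a_i ∘ G_(i+1) = 0` kills one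
of the terms on the right. -/
theorem mem_of_contractConv_eq_zero (hI0 : I 0 = annIdeal (G 0))
    (hIsucc : ∀ i, I (i + 1) = (I i).colon (annIdeal (G (i + 1))))
    {c : ℕ → MvPolynomial σ k} {d : ℕ} (h : contractConv c G d = 0) : c d ∈ I d := by
  refine mem_of_forall_contract_mul_prod_eq_zero hI0 hIsucc fun a ha => ?_
  rw [contractConv, Finset.sum_range_succ, Nat.sub_self, add_eq_zero_iff_eq_neg'] at h
  rw [mul_comm, contract_mul, h, contract_neg_right, contract_sum_right, neg_eq_zero]
  refine Finset.sum_eq_zero fun j hj => ?_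
  have hj := Finset.mem_range.mp hj
  let i₀ : Fin d := ⟨d - j - 1, by omega⟩
  have hi₀ : contract (a i₀) (G (d - j)) = 0 := by
    simpa [i₀, show d - j - 1 + 1 = d - j by omega] using ha i₀
  rw [← Finset.mul_prod_erase _ _ (Finset.mem_univ i₀), ← contract_mul, mul_comm (a i₀),
    mul_right_comm, contract_mul, hi₀, contract_zero_right]

theorem contractConv_update_of_lt (c : ℕ → MvPolynomial σ k) {D d : ℕ} (hd : d < D)
    (v : MvPolynomial σ k) : contractConv (Function.update c D v) G d = contractConv c G d :=
  Finset.sum_congr rfl fun j hj => by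
    rw [Function.update_of_ne (by have := Finset.mem_range.mp hj; omega)]

/-- Each `c_j` (`j < D`) lies in `I_j ⊆ I_(n-1-(D-j))`, so by `hmain` the term
`c_j ∘ G_(D-j)` lies in `R ∘ G_0` and can be cancelled by the new coefficient `c_D`. -/
theorem exists_contractConv_update_eq_zero (hI0 : I 0 = annIdeal (G 0))
    (hIsucc : ∀ i, I (i + 1) = (I i).colon (annIdeal (G (i + 1)))) {n : ℕ}
    (hmain : ∀ i < n, ∀ g ∈ I i, ∃ h : MvPolynomial σ k,
      contract g (G (n - 1 - i)) = contract h (G 0))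
    {c : ℕ → MvPolynomial σ k} {D : ℕ} (hD : D < n) (h : ∀ d < D, contractConv c G d = 0) :
    ∃ v, contractConv (Function.update c D v) G D = 0 := by
  have hlift : ∀ j < D, ∃ h : MvPolynomial σ k,
      contract (c j) (G (D - j)) = contract h (G 0) := by
    intro j hj
    have hmem := monotone_of_colon hIsucc (show j ≤ n - 1 - (D - j) by omega)
      (mem_of_contractConv_eq_zero hI0 hIsucc (h j hj))
    simpa [show n - 1 - (n - 1 - (D - j)) = D - j by omega] using hmain _ (by omega) _ hmem
  choose! h hh using hlift
  refine ⟨-∑ j ∈ Finset.range D, h j, ?_⟩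
  rw [contractConv, Finset.sum_range_succ, Nat.sub_self, Function.update_self, contract_neg_left,
    contract_sum_left, ← sub_eq_add_neg, sub_eq_zero]
  refine Finset.sum_congr rfl fun j hj => ?_
  have hj := Finset.mem_range.mp hj
  rw [Function.update_of_ne (by omega), hh j hj]

theorem exists_extension_contractConv_eq_zero (hI0 : I 0 = annIdeal (G 0))
    (hIsucc : ∀ i, I (i + 1) = (I i).colon (annIdeal (G (i + 1)))) {n : ℕ}
    (hmain : ∀ i < n, ∀ g ∈ I i, ∃ h : MvPolynomial σ k,
      contract g (G (n - 1 - i)) = contract h (G 0))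
    {m : ℕ} (hmn : m ≤ n) {c : ℕ → MvPolynomial σ k} (h : ∀ d < m, contractConv c G d = 0) :
    ∃ c', (∀ j < m, c' j = c j) ∧ ∀ d < n, contractConv c' G d = 0 := by
  suffices ∀ D, m ≤ D → D ≤ n →
      ∃ c', (∀ j < m, c' j = c j) ∧ ∀ d < D, contractConv c' G d = 0 from this n hmn le_rfl
  intro D hmD
  induction D, hmD using Nat.le_induction with
  | base => exact fun _ => ⟨c, fun _ _ => rfl, h⟩
  | succ D hmD ih =>
    intro hDn
    obtain ⟨c', hc'm, hc'D⟩ := ih (by omega)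
    obtain ⟨v, hv⟩ := exists_contractConv_update_eq_zero hI0 hIsucc hmain (by omega) hc'D
    refine ⟨Function.update c' D v, fun j hj => ?_, fun d hd => ?_⟩
    · rw [Function.update_of_ne (by omega), hc'm j hj]
    · rcases Nat.lt_succ_iff_lt_or_eq.mp hd with hd | rfl
      · rw [contractConv_update_of_lt c' hd, hc'D d hd]
      · exact hv

end ColonIdeals

section Coexactness

variable {σ : Type*} {G : ℕ → MvPolynomial σ k} {I : ℕ → Ideal (MvPolynomial σ k)} {n : ℕ}

theorem exists_tSum_tCoeff_eq (s : MvPolynomial (Option σ) k) (M : ℕ) :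
    ∃ N, M ≤ N ∧ tSum N (tCoeff s) = s :=
  ⟨max M ((optionEquivLeft k σ s).natDegree + 1), le_max_left _ _, tSum_tCoeff (by omega)⟩

theorem aeval_elim_eq_tCoeff_zero (s : MvPolynomial (Option σ) k) :
    aeval (fun o : Option σ => o.elim (0 : MvPolynomial σ k) X) s = tCoeff s 0 := by
  obtain ⟨N, hN, hs⟩ := exists_tSum_tCoeff_eq s 1
  conv_lhs => rw [← hs]
  exact aeval_elim_tSum hN _

/-- Complete the coefficients of `s` to a solution of all `n` equations: that is an element
of `Ann F` agreeing with `s` modulo `t^m`. -/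
theorem mk_mem_span_X_none_pow (hI0 : I 0 = annIdeal (G 0))
    (hIsucc : ∀ i, I (i + 1) = (I i).colon (annIdeal (G (i + 1))))
    (hmain : ∀ i < n, ∀ g ∈ I i, ∃ h : MvPolynomial σ k,
      contract g (G (n - 1 - i)) = contract h (G 0))
    {m : ℕ} (hmn : m ≤ n) {s : MvPolynomial (Option σ) k}
    (h : ∀ d < m, contractConv (tCoeff s) G d = 0) :
    Ideal.Quotient.mk (annIdeal (dualForm G n)) s
      ∈ Ideal.span {Ideal.Quotient.mk (annIdeal (dualForm G n)) (X none) ^ m} := by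
  obtain ⟨N, hnN, hs⟩ := exists_tSum_tCoeff_eq s n
  obtain ⟨c, hcm, hc⟩ := exists_extension_contractConv_eq_zero hI0 hIsucc hmain hmn h
  have hann : tSum n c ∈ annIdeal (dualForm G n) :=
    mem_annIdeal_iff.mpr ((contract_tSum_dualForm_eq_zero_iff le_rfl c G).mpr hc)
  have hagree : tSum m c = tSum m (tCoeff s) :=
    Finset.sum_congr rfl fun j hj => by rw [hcm j (Finset.mem_range.mp hj)]
  have hdiff : s - tSum n c ∈ Ideal.span {(X none : MvPolynomial (Option σ) k) ^ m} := by
    rw [show s - tSum n c = (tSum N (tCoeff s) - tSum m (tCoeff s)) - (tSum n c - tSum m c) by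
      rw [hs, hagree]; ring]
    exact sub_mem (tSum_sub_tSum_mem_span (by omega) _) (tSum_sub_tSum_mem_span hmn _)
  have := Ideal.mem_map_of_mem (Ideal.Quotient.mk (annIdeal (dualForm G n))) hdiff
  rwa [Ideal.map_span, Set.image_singleton, map_pow, map_sub,
    Ideal.Quotient.eq_zero_iff_mem.mpr hann, sub_zero] at this

theorem mem_span_X_none_pow_of_pow_mul_eq_zero (hI0 : I 0 = annIdeal (G 0))
    (hIsucc : ∀ i, I (i + 1) = (I i).colon (annIdeal (G (i + 1))))
    (hmain : ∀ i < n, ∀ g ∈ I i, ∃ h : MvPolynomial σ k,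
      contract g (G (n - 1 - i)) = contract h (G 0))
    (j : ℕ) (c : MvPolynomial (Option σ) k ⧸ annIdeal (dualForm G n))
    (hc : Ideal.Quotient.mk _ (X none) ^ j * c = 0) :
    c ∈ Ideal.span {Ideal.Quotient.mk (annIdeal (dualForm G n)) (X none) ^ (n - j)} := by
  obtain ⟨s, rfl⟩ := Ideal.Quotient.mk_surjective c
  rw [← map_pow, ← map_mul, Ideal.Quotient.eq_zero_iff_mem, mem_annIdeal_iff, mul_comm,
    contract_mul, contract_X_none_pow_dualForm] at hc
  obtain ⟨N, hnN, hs⟩ := exists_tSum_tCoeff_eq s n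
  rw [← hs, contract_tSum_dualForm_eq_zero_iff (by omega)] at hc
  exact mk_mem_span_X_none_pow hI0 hIsucc hmain (Nat.sub_le n j) hc

end Coexactness

section FreeExtension

theorem eq_zero_of_sum_pow_mul_eq_zero {R : Type*} [CommRing R] {T : R} {n : ℕ}
    (hexact : ∀ j (c : R), T ^ j * c = 0 → c ∈ Ideal.span {T ^ (n - j)})
    {w : ℕ → R} (hw : ∀ j < n, w j ∈ Ideal.span {T} → w j = 0)
    (hsum : ∑ j ∈ Finset.range n, T ^ j * w j = 0) : ∀ j < n, w j = 0 := by
  intro j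
  induction j using Nat.strong_induction_on with
  | _ j ih =>
    intro hj
    have hlow : ∑ i ∈ Finset.Ico 0 j, T ^ i * w i = 0 := Finset.sum_eq_zero fun i hi => by
      have := Finset.mem_Ico.mp hi
      rw [ih i this.2 (by omega), mul_zero]
    have htail : T ^ j * ∑ i ∈ Finset.Ico j n, T ^ (i - j) * w i = 0 := by
      rw [← hsum, Finset.range_eq_Ico, ← Finset.sum_Ico_consecutive _ (Nat.zero_le j) hj.le,
        hlow, zero_add, Finset.mul_sum]
      refine Finset.sum_congr rfl fun i hi => ?_
      rw [← mul_assoc, ← pow_add, Nat.add_sub_cancel' (Finset.mem_Ico.mp hi).1]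
    have hmem := Ideal.span_singleton_le_span_singleton.mpr (dvd_pow_self T (by omega))
      (hexact j _ htail)
    rw [Finset.sum_eq_sum_Ico_succ_bot hj, Nat.sub_self, pow_zero, one_mul] at hmem
    refine hw j hj ((Ideal.add_mem_iff_left _ (Ideal.sum_mem _ fun i hi => ?_)).mp hmem)
    have := (Finset.mem_Ico.mp hi).1
    exact Ideal.mul_mem_right _ _ (Ideal.mem_span_singleton.mpr (dvd_pow_self T (by omega)))

abbrev TruncPoly (K : Type*) [Field K] (n : ℕ) : Type _ :=
  Polynomial K ⧸ Ideal.span {(Polynomial.X : Polynomial K) ^ n}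

abbrev TruncPoly.X (K : Type*) [Field K] (n : ℕ) : TruncPoly K n :=
  Ideal.Quotient.mk _ Polynomial.X

theorem exists_eq_sum_smul_X_pow {n : ℕ} (a : TruncPoly k n) :
    ∃ l : ℕ → k, a = ∑ j ∈ Finset.range n, l j • TruncPoly.X k n ^ j := by
  obtain ⟨p, rfl⟩ := Ideal.Quotient.mk_surjective a
  refine ⟨p.coeff, ?_⟩
  have hsum : ∑ j ∈ Finset.range n, p.coeff j • Ideal.Quotient.mk
      (Ideal.span {(Polynomial.X : Polynomial k) ^ n}) Polynomial.X ^ j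
      = Ideal.Quotient.mkₐ k _ (∑ j ∈ Finset.range n, p.coeff j • Polynomial.X ^ j) := by
    simp [map_sum, map_smul, map_pow, Ideal.Quotient.mkₐ_eq_mk]
  rw [hsum, Ideal.Quotient.mkₐ_eq_mk, Ideal.Quotient.eq, Ideal.mem_span_singleton,
    Polynomial.X_pow_dvd_iff]
  intro d hd
  simp [Polynomial.finsetSum_coeff, Polynomial.coeff_X_pow, hd]

variable {C : Type*} [CommRing C] [Algebra k C] {n : ℕ}
  [Algebra (TruncPoly k n) C] [IsScalarTower k (TruncPoly k n) C]
  {T : C}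

/-- Nakayama's lemma for the nilpotent element `T`. -/
theorem span_range_eq_top_of_span_range_mkₐ
    (hT : algebraMap (TruncPoly k n) C (TruncPoly.X k n) = T) {ι : Type*} {e : ι → C}
    (he : Submodule.span k (Set.range (Ideal.Quotient.mkₐ k (Ideal.span {T}) ∘ e)) = ⊤) :
    Submodule.span (TruncPoly k n) (Set.range e) = ⊤ := by
  set P := Submodule.span (TruncPoly k n) (Set.range e)
  have happrox : ∀ j (c : C), ∃ v ∈ P, c - v ∈ Ideal.span {T ^ j} := by
    intro j c
    induction j with
    | zero => exact ⟨0, P.zero_mem, by simp⟩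
    | succ j ih =>
      obtain ⟨v, hv, hcv⟩ := ih
      obtain ⟨u, hu⟩ := Ideal.mem_span_singleton'.mp hcv
      obtain ⟨f, hf⟩ := Finsupp.mem_span_range_iff_exists_finsupp.mp
        (he ▸ Submodule.mem_top : Ideal.Quotient.mkₐ k _ u ∈ Submodule.span k _)
      set y := f.sum fun i a => a • e i
      have hy : y ∈ P := Submodule.sum_mem _ fun i _ =>
        Submodule.smul_of_tower_mem _ _ (Submodule.subset_span ⟨i, rfl⟩)
      obtain ⟨u', hu'⟩ := Ideal.mem_span_singleton'.mp (Ideal.Quotient.eq.mp <|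
        (by simpa [y, Finsupp.sum, map_sum, map_smul] using hf.symm :
          Ideal.Quotient.mkₐ k (Ideal.span {T}) u = Ideal.Quotient.mkₐ k _ y))
      refine ⟨v + T ^ j * y, P.add_mem hv ?_, Ideal.mem_span_singleton'.mpr ⟨u', ?_⟩⟩
      · rw [← hT, ← map_pow, ← Algebra.smul_def]
        exact P.smul_mem _ hy
      · linear_combination T ^ j * hu' + hu
  have hTn : T ^ n = 0 := by
    rw [← hT, ← map_pow, ← map_pow,
      Ideal.Quotient.eq_zero_iff_mem.mpr (Ideal.mem_span_singleton_self _), map_zero]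
  refine Submodule.eq_top_iff'.mpr fun c => ?_
  obtain ⟨v, hv, hcv⟩ := happrox n c
  rw [hTn, Ideal.span_singleton_eq_bot.mpr rfl, Ideal.mem_bot, sub_eq_zero] at hcv
  rwa [hcv]

/-- Writing the coefficients in the `k`-basis `1, X, …, X^(n-1)`, a relation becomes
`∑ T^j w_j = 0`, and exactness peels off the `w_j` one at a time. -/
theorem linearIndependent_of_linearIndependent_mkₐ
    (hT : algebraMap (TruncPoly k n) C (TruncPoly.X k n) = T) {ι : Type*} {e : ι → C}
    (hexact : ∀ j (c : C), T ^ j * c = 0 → c ∈ Ideal.span {T ^ (n - j)})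
    (he : LinearIndependent k (Ideal.Quotient.mkₐ k (Ideal.span {T}) ∘ e)) :
    LinearIndependent (TruncPoly k n) e := by
  rw [linearIndependent_iff']
  intro s g hg i hi
  choose l hl using fun i => exists_eq_sum_smul_X_pow (g i)
  set w : ℕ → C := fun j => ∑ i ∈ s, l i j • e i
  have hl0 : ∀ j, w j ∈ Ideal.span {T} → ∀ i ∈ s, l i j = 0 := fun j hj =>
    linearIndependent_iff'.mp he s (fun i => l i j) <| by
      have : Ideal.Quotient.mkₐ k (Ideal.span {T}) (w j) = 0 :=
        Ideal.Quotient.eq_zero_iff_mem.mpr hj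
      simpa [w, map_sum, map_smul] using this
  have hsum : ∑ j ∈ Finset.range n, T ^ j * w j = 0 := by
    rw [← hg]
    simp only [w, Finset.mul_sum, hl, Finset.sum_smul]
    rw [Finset.sum_comm]
    refine Finset.sum_congr rfl fun i _ => Finset.sum_congr rfl fun j _ => ?_
    rw [smul_assoc, Algebra.smul_def (TruncPoly.X k n ^ j), map_pow, hT, mul_smul_comm]
  have hw : ∀ j < n, w j = 0 := eq_zero_of_sum_pow_mul_eq_zero hexact
    (fun j _ hj => Finset.sum_eq_zero fun i hi => by rw [hl0 j hj i hi, zero_smul]) hsum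
  rw [hl i]
  refine Finset.sum_eq_zero fun j hj => ?_
  rw [hl0 j (by rw [hw j (Finset.mem_range.mp hj)]; exact zero_mem _) i hi, zero_smul]

theorem free_of_forall_pow_mul_eq_zero (hT : algebraMap (TruncPoly k n) C (TruncPoly.X k n) = T)
    (hexact : ∀ j (c : C), T ^ j * c = 0 → c ∈ Ideal.span {T ^ (n - j)}) :
    Module.Free (TruncPoly k n) C := by
  let b := Module.Basis.ofVectorSpace k (C ⧸ Ideal.span {T})
  let e := Function.surjInv (Ideal.Quotient.mkₐ_surjective k _) ∘ b
  have hmk : Ideal.Quotient.mkₐ k (Ideal.span {T}) ∘ e = b :=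
    funext fun i => Function.surjInv_eq (Ideal.Quotient.mkₐ_surjective k _) (b i)
  exact .of_basis (Module.Basis.mk
    (linearIndependent_of_linearIndependent_mkₐ hT hexact (hmk ▸ b.linearIndependent))
    (span_range_eq_top_of_span_range_mkₐ hT (hmk ▸ b.span_eq)).ge)

end FreeExtension

theorem main_theorem_sufficiency_general (r n : ℕ) (hn : 1 ≤ n)
    (G : ℕ → MvPolynomial (Fin r) k)
    (F : MvPolynomial (Option (Fin r)) k)
    (hF : F = ∑ i ∈ Finset.range n, X none ^ (n - 1 - i) * rename Option.some (G i))
    -- the ideals I_0 = Ann(G_0), I_i = (I_{i-1} : Ann(G_i))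
    (I : ℕ → Ideal (MvPolynomial (Fin r) k))
    (hI0 : I 0 = annIdeal (G 0))
    (hIsucc : ∀ i, I (i + 1) = (I i).colon (annIdeal (G (i + 1))))
    -- the hypothesis: I_i ∘ G_{n-1-i} ⊆ R ∘ F_B for i = 0, …, n-1
    (hmain : ∀ i < n, ∀ g ∈ I i, ∃ h : MvPolynomial (Fin r) k,
      contract g (G (n - 1 - i)) = contract h (G 0))
    -- the algebra maps ι : A → C (induced by t ↦ t) and π : C → B (induced by x_i ↦ x_i, t ↦ 0)
    (ι : (Polynomial k ⧸ Ideal.span {(Polynomial.X : Polynomial k) ^ n}) →ₐ[k]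
      (MvPolynomial (Option (Fin r)) k ⧸ annIdeal F))
    (hι : ι (Ideal.Quotient.mk _ Polynomial.X) = Ideal.Quotient.mk _ (X none))
    (π : (MvPolynomial (Option (Fin r)) k ⧸ annIdeal F) →ₐ[k]
      (MvPolynomial (Fin r) k ⧸ annIdeal (G 0)))
    (hπ : ∀ s : MvPolynomial (Option (Fin r)) k,
      π (Ideal.Quotient.mk _ s)
        = Ideal.Quotient.mk _ (aeval (fun o => o.elim 0 fun i => X i) s)) :
    -- coexactness: π is surjective with kernel t·C …
    Function.Surjective π ∧
    RingHom.ker π = Ideal.span {Ideal.Quotient.mk (annIdeal F) (X none)} ∧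
    -- … and C is a free A-module via ι
    freeVia ι.toRingHom := by
  change F = dualForm G n at hF
  subst hF
  refine ⟨fun b => ?_, le_antisymm (fun c hc => ?_) (Ideal.span_le.mpr ?_), ?_⟩
  · obtain ⟨g, rfl⟩ := Ideal.Quotient.mk_surjective b
    refine ⟨Ideal.Quotient.mk _ (rename some g), ?_⟩
    rw [hπ, aeval_elim_rename_some]
  · obtain ⟨s, rfl⟩ := Ideal.Quotient.mk_surjective c
    rw [RingHom.mem_ker, hπ, aeval_elim_eq_tCoeff_zero, Ideal.Quotient.eq_zero_iff_mem,
      mem_annIdeal_iff] at hc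
    simpa using mk_mem_span_X_none_pow hI0 hIsucc hmain hn (m := 1) (s := s)
      (by simpa [contractConv] using hc)
  · rintro _ rfl
    rw [SetLike.mem_coe, RingHom.mem_ker, hπ, aeval_X]
    exact Ideal.Quotient.eq_zero_iff_mem.mpr (zero_mem _)
  · let _ := ι.toRingHom.toAlgebra
    have _ : IsScalarTower k (TruncPoly k n)
        (MvPolynomial (Option (Fin r)) k ⧸ annIdeal (dualForm G n)) :=
      ⟨fun a b c => show ι (a • b) * c = a • (ι b * c) by rw [map_smul, smul_mul_assoc]⟩
    exact free_of_forall_pow_mul_eq_zero hι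
      (mem_span_X_none_pow_of_pow_mul_eq_zero hI0 hIsucc hmain)

/-- Theorem 3.2 (sufficiency).  `R = k[x_1,…,x_r]`, `S = R[t]` (`t` is the variable `X none`),
`Q` and `Q_S` their duals, `G 0 = F_B` nonzero homogeneous of degree `j_B`, `G i`
homogeneous of degree `j_B + i`, and
`F = T^{n-1}G_0 + T^{n-2}G_1 + ⋯ + G_{n-1}`.  With `I_0 = Ann(G_0)`,
`I_i = (I_{i-1} : Ann(G_i))`, if `I_i ∘ G_{n-1-i} ⊆ R ∘ F_B` for all `i ≤ n-1`, then
`π : C → B` is surjective with `ker π = t·C` (coexactness) and `C = S/Ann(F)` is a free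
extension of `A = k[t]/(t^n)` with fiber `B = R/Ann(F_B)`; in particular `C` is a free
`A`-module via `ι`. -/
theorem main_theorem_sufficiency (r n : ℕ) (hn : 1 ≤ n) (jB : ℕ)
    (G : ℕ → MvPolynomial (Fin r) k) (hG0 : G 0 ≠ 0)
    (hGhom : ∀ i < n, (G i).IsHomogeneous (jB + i))
    (F : MvPolynomial (Option (Fin r)) k)
    (hF : F = ∑ i ∈ Finset.range n, X none ^ (n - 1 - i) * rename Option.some (G i))
    -- the ideals I_0 = Ann(G_0), I_i = (I_{i-1} : Ann(G_i))
    (I : ℕ → Ideal (MvPolynomial (Fin r) k))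
    (hI0 : I 0 = annIdeal (G 0))
    (hIsucc : ∀ i, I (i + 1) = (I i).colon (annIdeal (G (i + 1))))
    -- the hypothesis: I_i ∘ G_{n-1-i} ⊆ R ∘ F_B for i = 0, …, n-1
    (hmain : ∀ i < n, ∀ g ∈ I i, ∃ h : MvPolynomial (Fin r) k,
      contract g (G (n - 1 - i)) = contract h (G 0))
    -- the algebra maps ι : A → C (induced by t ↦ t) and π : C → B (induced by x_i ↦ x_i, t ↦ 0)
    (ι : (Polynomial k ⧸ Ideal.span {(Polynomial.X : Polynomial k) ^ n}) →ₐ[k]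
      (MvPolynomial (Option (Fin r)) k ⧸ annIdeal F))
    (hι : ι (Ideal.Quotient.mk _ Polynomial.X) = Ideal.Quotient.mk _ (X none))
    (π : (MvPolynomial (Option (Fin r)) k ⧸ annIdeal F) →ₐ[k]
      (MvPolynomial (Fin r) k ⧸ annIdeal (G 0)))
    (hπ : ∀ s : MvPolynomial (Option (Fin r)) k,
      π (Ideal.Quotient.mk _ s)
        = Ideal.Quotient.mk _ (aeval (fun o => o.elim 0 fun i => X i) s)) :
    -- coexactness: π is surjective with kernel t·C …
    Function.Surjective π ∧
    RingHom.ker π = Ideal.span {Ideal.Quotient.mk (annIdeal F) (X none)} ∧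
    -- … and C is a free A-module via ι
    freeVia ι.toRingHom :=
  main_theorem_sufficiency_general r n hn G F hF I hI0 hIsucc hmain ι hι π hπ
end
end

section
/- Suppose that C = S/Ann_S(F) is a free extension of A = k[t]/(t^n) with fiber B. Then I_0 ∘ G_i ⊆ R∘G_0 + R∘G_1 + ⋯ + R∘G_{i−1} (sum of R-submodules of Q) for every i = 1, …, n−1. -/
/-!
If `g ∘ G_0 = 0`, then `g` maps to zero in `B`, so by the fiber condition `ker π = t·C` there is
`s ∈ S` with `g - t·s ∈ Ann_S(F)`, i.e. `g ∘ F = (t·s) ∘ F`. Contraction by `T^m` only lowers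
`T`-degrees by `m`, so comparing the coefficients of `T^(n-1-i)` on both sides gives
`g ∘ G_i = ∑_{j<i} s_{i-1-j} ∘ G_j`, where `s_m` is the coefficient of `t^m` in `s`.
-/

open MvPolynomial

noncomputable section

variable {k : Type*} [Field k]

theorem Finsupp.optionElim_le_optionElim_iff {α M : Type*} [Zero M] [Preorder M]
    {y y' : M} {f f' : α →₀ M} : f.optionElim y ≤ f'.optionElim y' ↔ y ≤ y' ∧ f ≤ f' := by
  simp [Finsupp.le_def, Option.forall]

theorem Finsupp.optionElim_tsub_optionElim {α M : Type*} [AddCommMonoid M] [PartialOrder M]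
    [CanonicallyOrderedAdd M] [Sub M] [OrderedSub M] (y y' : M) (f f' : α →₀ M) :
    f'.optionElim y' - f.optionElim y = (f' - f).optionElim (y' - y) := by
  ext o
  cases o <;> simp

theorem exists_rename_sub_X_none_mul_mem {σ : Type*} {J : Ideal (MvPolynomial σ k)}
    {K : Ideal (MvPolynomial (Option σ) k)}
    (π : (MvPolynomial (Option σ) k ⧸ K) →ₐ[k] (MvPolynomial σ k ⧸ J))
    (hπ : ∀ s, π (Ideal.Quotient.mk K s)
      = Ideal.Quotient.mk J (aeval (fun o => o.elim 0 fun i => X i) s))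
    (hker : RingHom.ker π = Ideal.span {Ideal.Quotient.mk K (X none)})
    {g : MvPolynomial σ k} (hg : g ∈ J) :
    ∃ s, rename some g - X none * s ∈ K := by
  have hmem : Ideal.Quotient.mk K (rename some g) ∈ RingHom.ker π := by
    rw [RingHom.mem_ker, hπ, aeval_rename]
    exact Ideal.Quotient.eq_zero_iff_mem.2 ((aeval_X_left_apply g).symm ▸ hg)
  rw [hker, Ideal.mem_span_singleton'] at hmem
  obtain ⟨c, hc⟩ := hmem
  obtain ⟨s, rfl⟩ := Ideal.Quotient.mk_surjective c
  exact ⟨s, Ideal.Quotient.eq.1 (by rw [← hc, map_mul, mul_comm])⟩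

namespace Contraction

variable {σ : Type*}

open Classical in
theorem contract_eq_sum (g F : MvPolynomial σ k) :
    contract g F = (AddMonoidAlgebra.coeff g).sum fun a c =>
      (AddMonoidAlgebra.coeff F).sum fun b d =>
        if a ≤ b then monomial (b - a) (c * d) else 0 := by
  simp only [sum_def, contract]

theorem contract_add_left (g g' F : MvPolynomial σ k) :
    contract (g + g') F = contract g F + contract g' F := by
  classical
  simp only [contract_eq_sum, AddMonoidAlgebra.coeff_add]
  refine Finsupp.sum_add_index' (fun _ => by simp) fun a c c' => ?_
  rw [← Finsupp.sum_add]
  refine Finsupp.sum_congr fun b _ => ?_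
  split_ifs <;> simp [add_mul]

theorem contract_add_right (g F F' : MvPolynomial σ k) :
    contract g (F + F') = contract g F + contract g F' := by
  classical
  simp only [contract_eq_sum, AddMonoidAlgebra.coeff_add, ← Finsupp.sum_add]
  refine Finsupp.sum_congr fun a _ => Finsupp.sum_add_index' (fun _ => by simp) fun b d d' => ?_
  split_ifs <;> simp [mul_add]

@[simp] theorem zero_contract (F : MvPolynomial σ k) : contract 0 F = 0 := by
  simp [contract_eq_sum]

@[simp] theorem contract_zero (g : MvPolynomial σ k) : contract g 0 = 0 := by
  simp [contract_eq_sum]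

def contractLeft (F : MvPolynomial σ k) : MvPolynomial σ k →+ MvPolynomial σ k :=
  AddMonoidHom.mk' (contract · F) (contract_add_left · · F)

def contractRight (g : MvPolynomial σ k) : MvPolynomial σ k →+ MvPolynomial σ k :=
  AddMonoidHom.mk' (contract g) (contract_add_right g)

theorem sum_contract {ι : Type*} (s : Finset ι) (f : ι → MvPolynomial σ k)
    (F : MvPolynomial σ k) : contract (∑ i ∈ s, f i) F = ∑ i ∈ s, contract (f i) F :=
  map_sum (contractLeft F) f s

theorem contract_sum {ι : Type*} (s : Finset ι) (f : ι → MvPolynomial σ k)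
    (g : MvPolynomial σ k) : contract g (∑ i ∈ s, f i) = ∑ i ∈ s, contract g (f i) :=
  map_sum (contractRight g) f s

theorem sub_contract (g g' F : MvPolynomial σ k) :
    contract (g - g') F = contract g F - contract g' F :=
  map_sub (contractLeft F) g g'

open Classical in
theorem monomial_contract_monomial (a b : σ →₀ ℕ) (c d : k) :
    contract (monomial a c) (monomial b d)
      = if a ≤ b then monomial (b - a) (c * d) else 0 := by
  rw [contract_eq_sum, sum_monomial_eq (by simp),
    sum_monomial_eq (by simp)]

theorem mul_contract (p q F : MvPolynomial σ k) :
    contract (p * q) F = contract p (contract q F) := by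
  classical
  induction p using MvPolynomial.induction_on' with
  | add p p' hp hp' => rw [add_mul, contract_add_left, contract_add_left, hp, hp']
  | monomial a c =>
  induction q using MvPolynomial.induction_on' with
  | add q q' hq hq' =>
    rw [mul_add, contract_add_left, contract_add_left q, contract_add_right, hq, hq']
  | monomial a' c' =>
  induction F using MvPolynomial.induction_on' with
  | add F F' hF hF' => simp only [contract_add_right, hF, hF']
  | monomial b d =>
    rw [monomial_mul, monomial_contract_monomial, monomial_contract_monomial]
    by_cases h' : a' ≤ b
    · rw [if_pos h', monomial_contract_monomial]
      simp only [le_tsub_iff_right h', tsub_tsub, add_comm a', mul_assoc]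
    · rw [if_neg h', if_neg fun h => h' (le_add_self.trans h), contract_zero]

def annSetIdeal (F : MvPolynomial σ k) : Ideal (MvPolynomial σ k) where
  carrier := annSet F
  zero_mem' := zero_contract F
  add_mem' {g g'} hg hg' := by
    simp only [annSet, Set.mem_ofPred_eq, contract_add_left] at *
    rw [hg, hg', add_zero]
  smul_mem' p g hg := by
    simp only [annSet, Set.mem_ofPred_eq, smul_eq_mul, mul_contract] at *
    rw [hg, contract_zero]

theorem mem_annIdeal {F g : MvPolynomial σ k} : g ∈ annIdeal F ↔ contract g F = 0 := by
  change g ∈ Ideal.span (annSetIdeal F : Set _) ↔ _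
  rw [Ideal.span_eq]
  rfl

theorem optionEquivLeft_X_none_pow_mul_rename (m : ℕ) (H : MvPolynomial σ k) :
    optionEquivLeft k σ (X none ^ m * rename some H) = Polynomial.monomial m H := by
  have hrename : optionEquivLeft k σ (rename some H) = Polynomial.C H := by
    induction H using MvPolynomial.induction_on with
    | C a => simp
    | add p q hp hq => simp [hp, hq]
    | mul_X p i hp => simp [hp]
  rw [map_mul, map_pow, optionEquivLeft_X_none, hrename, mul_comm,
    Polynomial.C_mul_X_pow_eq_monomial]

theorem X_none_pow_mul_rename_monomial (m : ℕ) (b : σ →₀ ℕ) (d : k) :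
    X none ^ m * rename some (monomial b d) = monomial (b.optionElim m) d := by
  apply (optionEquivLeft k σ).injective
  rw [optionEquivLeft_X_none_pow_mul_rename, optionEquivLeft_monomial,
    Finsupp.some_optionElim, Finsupp.optionElim_apply_none]

theorem X_none_pow_mul_rename_contract (m e : ℕ) (p H : MvPolynomial σ k) :
    contract (X none ^ m * rename some p) (X none ^ e * rename some H)
      = if m ≤ e then X none ^ (e - m) * rename some (contract p H) else 0 := by
  induction p using MvPolynomial.induction_on' with
  | add p p' hp hp' =>
    rw [map_add, mul_add, contract_add_left, hp, hp']
    split_ifs <;> simp [contract_add_left, mul_add]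
  | monomial a c =>
  induction H using MvPolynomial.induction_on' with
  | add H H' hH hH' =>
    rw [map_add, mul_add, contract_add_right, hH, hH']
    split_ifs <;> simp [contract_add_right, mul_add]
  | monomial b d =>
    classical
    rw [X_none_pow_mul_rename_monomial, X_none_pow_mul_rename_monomial,
      monomial_contract_monomial, monomial_contract_monomial]
    simp only [Finsupp.optionElim_le_optionElim_iff]
    by_cases hm : m ≤ e
    · by_cases hab : a ≤ b
      · simp [hm, hab, Finsupp.optionElim_tsub_optionElim, X_none_pow_mul_rename_monomial]
      · simp [hab]
    · simp [hm]

-- The coefficient `s_m` of `t^m` in `s ∈ S = R[t]`, where `t` is the variable `X none`.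
def coeffNone (m : ℕ) : MvPolynomial (Option σ) k →+ MvPolynomial σ k :=
  (Polynomial.lcoeff (MvPolynomial σ k) m).toAddMonoidHom.comp
    (optionEquivLeft k σ).toAddMonoidHom

theorem coeffNone_apply (m : ℕ) (s : MvPolynomial (Option σ) k) :
    coeffNone m s = (optionEquivLeft k σ s).coeff m :=
  rfl

theorem coeffNone_X_none_pow_mul_rename (m' m : ℕ) (H : MvPolynomial σ k) :
    coeffNone m' (X none ^ m * rename some H) = if m = m' then H else 0 := by
  rw [coeffNone_apply, optionEquivLeft_X_none_pow_mul_rename, Polynomial.coeff_monomial]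

theorem coeffNone_succ_X_none_mul (m : ℕ) (s : MvPolynomial (Option σ) k) :
    coeffNone (m + 1) (X none * s) = coeffNone m s := by
  rw [coeffNone_apply, map_mul, optionEquivLeft_X_none, Polynomial.coeff_X_mul, coeffNone_apply]

theorem coeffNone_zero_X_none_mul (s : MvPolynomial (Option σ) k) :
    coeffNone 0 (X none * s) = 0 := by
  rw [coeffNone_apply, map_mul, optionEquivLeft_X_none, Polynomial.coeff_X_mul_zero]

theorem sum_X_none_pow_mul_rename_coeffNone (s : MvPolynomial (Option σ) k) {N : ℕ}
    (hN : (optionEquivLeft k σ s).natDegree < N) :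
    ∑ m ∈ Finset.range N, X none ^ m * rename some (coeffNone m s) = s := by
  apply (optionEquivLeft k σ).injective
  simp only [map_sum, optionEquivLeft_X_none_pow_mul_rename]
  exact (Polynomial.as_sum_range' _ N hN).symm

theorem coeffNone_contract_X_none_pow_mul_rename (e d : ℕ) (s : MvPolynomial (Option σ) k)
    (H : MvPolynomial σ k) :
    coeffNone e (contract s (X none ^ d * rename some H))
      = if e ≤ d then contract (coeffNone (d - e) s) H else 0 := by
  conv_lhs => rw [← sum_X_none_pow_mul_rename_coeffNone s
    (N := (optionEquivLeft k σ s).natDegree + d + 1) (by omega)]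
  simp only [sum_contract, map_sum, X_none_pow_mul_rename_contract, apply_ite (coeffNone e),
    map_zero, coeffNone_X_none_pow_mul_rename, ← ite_and]
  split_ifs with he
  · rw [Finset.sum_eq_single_of_mem (d - e) (Finset.mem_range.2 (by omega))
      fun m _ hm => if_neg (by omega), if_pos (by omega)]
  · exact Finset.sum_eq_zero fun m _ => if_neg (by omega)

theorem coeffNone_contract_sum {n i : ℕ} (hi : i < n) (G : ℕ → MvPolynomial σ k)
    (s : MvPolynomial (Option σ) k) :
    coeffNone (n - 1 - i)
        (contract s (∑ j ∈ Finset.range n, X none ^ (n - 1 - j) * rename some (G j)))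
      = ∑ j ∈ Finset.range (i + 1), contract (coeffNone (i - j) s) (G j) := by
  rw [contract_sum, map_sum, ← Finset.sum_subset (Finset.range_subset_range.2 hi)]
  · refine Finset.sum_congr rfl fun j hj => ?_
    rw [Finset.mem_range] at hj
    rw [coeffNone_contract_X_none_pow_mul_rename, if_pos (by omega),
      show n - 1 - j - (n - 1 - i) = i - j by omega]
  · intro j hjn hji
    rw [Finset.mem_range] at hjn hji
    rw [coeffNone_contract_X_none_pow_mul_rename, if_neg (by omega)]

theorem coeffNone_rename_contract_sum {n i : ℕ} (hi : i < n) (G : ℕ → MvPolynomial σ k)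
    (g : MvPolynomial σ k) :
    coeffNone (n - 1 - i)
        (contract (rename some g)
          (∑ j ∈ Finset.range n, X none ^ (n - 1 - j) * rename some (G j)))
      = contract g (G i) := by
  have hcoeff (m : ℕ) : coeffNone m (rename some g) = if 0 = m then g else 0 := by
    simpa using coeffNone_X_none_pow_mul_rename m 0 g
  rw [coeffNone_contract_sum hi, Finset.sum_range_succ, Finset.sum_eq_zero, zero_add, hcoeff,
    if_pos (by omega)]
  intro j hj
  rw [Finset.mem_range] at hj
  rw [hcoeff, if_neg (by omega), zero_contract]

theorem coeffNone_X_none_mul_contract_sum {n i : ℕ} (hi : i < n) (G : ℕ → MvPolynomial σ k)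
    (s : MvPolynomial (Option σ) k) :
    coeffNone (n - 1 - i)
        (contract (X none * s) (∑ j ∈ Finset.range n, X none ^ (n - 1 - j) * rename some (G j)))
      = ∑ j ∈ Finset.range i, contract (coeffNone (i - 1 - j) s) (G j) := by
  rw [coeffNone_contract_sum hi, Finset.sum_range_succ, Nat.sub_self, coeffNone_zero_X_none_mul,
    zero_contract, add_zero]
  refine Finset.sum_congr rfl fun j hj => ?_
  rw [Finset.mem_range] at hj
  rw [show i - j = i - 1 - j + 1 by omega, coeffNone_succ_X_none_mul]

end Contraction

open Contraction in
theorem main_theorem_necessity_general (r n : ℕ)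
    (G : ℕ → MvPolynomial (Fin r) k)
    (F : MvPolynomial (Option (Fin r)) k)
    (hF : F = ∑ i ∈ Finset.range n, X none ^ (n - 1 - i) * rename Option.some (G i))
    (I : ℕ → Ideal (MvPolynomial (Fin r) k))
    (hI0 : I 0 = annIdeal (G 0))
    -- the algebra maps ι : A → C (induced by t ↦ t) and π : C → B (induced by x_i ↦ x_i, t ↦ 0)
    (π : (MvPolynomial (Option (Fin r)) k ⧸ annIdeal F) →ₐ[k]
      (MvPolynomial (Fin r) k ⧸ annIdeal (G 0)))
    (hπ : ∀ s : MvPolynomial (Option (Fin r)) k,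
      π (Ideal.Quotient.mk _ s)
        = Ideal.Quotient.mk _ (aeval (fun o => o.elim 0 fun i => X i) s))
    -- C is a free extension of A with fiber B:
    (hker : RingHom.ker π = Ideal.span {Ideal.Quotient.mk (annIdeal F) (X none)}) :
    -- then I_0 ∘ G_i ⊆ R∘G_0 + ⋯ + R∘G_{i-1} for i = 1, …, n-1
    ∀ i, 1 ≤ i → i ≤ n - 1 → ∀ g ∈ I 0, ∃ h : ℕ → MvPolynomial (Fin r) k,
      contract g (G i) = ∑ j ∈ Finset.range i, contract (h j) (G j) := by
  intro i hi₁ hi₂ g hg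
  rw [hI0] at hg
  obtain ⟨s, hs⟩ := exists_rename_sub_X_none_mul_mem π hπ hker hg
  have hcontract : contract (rename some g) F = contract (X none * s) F := by
    rw [← sub_eq_zero, ← sub_contract]
    exact mem_annIdeal.1 hs
  have hin : i < n := by omega
  refine ⟨fun j => coeffNone (i - 1 - j) s, ?_⟩
  subst hF
  rw [← coeffNone_rename_contract_sum hin, hcontract, coeffNone_X_none_mul_contract_sum hin]

/-- Theorem 3.2 (necessity part).  With the setup of the main theorem, if
`F = T^{n-1}G_0 + ⋯ + G_{n-1}` defines a free extension `C = S/Ann(F)` of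
`A = k[t]/(t^n)` with fiber `B = R/Ann(F_B)`, then
`I_0 ∘ G_i ⊆ R∘G_0 + R∘G_1 + ⋯ + R∘G_{i-1}` for every `i = 1, …, n-1`. -/
theorem main_theorem_necessity (r n : ℕ) (hn : 1 ≤ n) (jB : ℕ)
    (G : ℕ → MvPolynomial (Fin r) k) (hG0 : G 0 ≠ 0)
    (hGhom : ∀ i < n, (G i).IsHomogeneous (jB + i))
    (F : MvPolynomial (Option (Fin r)) k)
    (hF : F = ∑ i ∈ Finset.range n, X none ^ (n - 1 - i) * rename Option.some (G i))
    (I : ℕ → Ideal (MvPolynomial (Fin r) k))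
    (hI0 : I 0 = annIdeal (G 0))
    (hIsucc : ∀ i, I (i + 1) = (I i).colon (annIdeal (G (i + 1))))
    -- the algebra maps ι : A → C (induced by t ↦ t) and π : C → B (induced by x_i ↦ x_i, t ↦ 0)
    (ι : (Polynomial k ⧸ Ideal.span {(Polynomial.X : Polynomial k) ^ n}) →ₐ[k]
      (MvPolynomial (Option (Fin r)) k ⧸ annIdeal F))
    (hι : ι (Ideal.Quotient.mk _ Polynomial.X) = Ideal.Quotient.mk _ (X none))
    (π : (MvPolynomial (Option (Fin r)) k ⧸ annIdeal F) →ₐ[k]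
      (MvPolynomial (Fin r) k ⧸ annIdeal (G 0)))
    (hπ : ∀ s : MvPolynomial (Option (Fin r)) k,
      π (Ideal.Quotient.mk _ s)
        = Ideal.Quotient.mk _ (aeval (fun o => o.elim 0 fun i => X i) s))
    -- C is a free extension of A with fiber B:
    (hfree : freeVia ι.toRingHom)
    (hsurj : Function.Surjective π)
    (hker : RingHom.ker π = Ideal.span {Ideal.Quotient.mk (annIdeal F) (X none)}) :
    -- then I_0 ∘ G_i ⊆ R∘G_0 + ⋯ + R∘G_{i-1} for i = 1, …, n-1
    ∀ i, 1 ≤ i → i ≤ n - 1 → ∀ g ∈ I 0, ∃ h : ℕ → MvPolynomial (Fin r) k,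
      contract g (G i) = ∑ j ∈ Finset.range i, contract (h j) (G j) :=
  main_theorem_necessity_general r n G F hF I hI0 π hπ hker

end
end

section
/- Let A, C, B be Poincaré duality algebras of socle degrees j_A, j_C, j_B respectively, with j_C = j_A + j_B, and let ι : A → C and π : C → B be graded k-algebra homomorphisms such that π is surjective and ker π equals the ideal of C generated by ι(A_+). Then C is a free A-module via ι. -/
noncomputable section

variable {k : Type*} [Field k]

/-- A graded algebra `A` with grading `𝒜` is a Poincaré duality algebra of socle degree
`j` if `A_j` is one-dimensional, `A_i = 0` for `i > j`, and for each `0 ≤ i ≤ j` the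
multiplication pairing `A_i × A_{j-i} → A_j ≅ k` is nondegenerate. -/
def IsPoincareDuality {A : Type*} [CommRing A] [Algebra k A]
    (𝒜 : ℕ → Submodule k A) (j : ℕ) : Prop :=
  Module.finrank k (𝒜 j) = 1 ∧ (∀ i, j < i → 𝒜 i = ⊥) ∧
    (∀ i ≤ j, ∀ a ∈ 𝒜 i, a ≠ 0 → ∃ b ∈ 𝒜 (j - i), a * b ≠ 0)

/-!
Lift a homogeneous `k`-basis of `B` to homogeneous elements `c i` of `C`. Since
`ker π = ι(A₊) C`, a graded Nakayama argument shows, degree by degree, that the `c i` generate `C`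
over `A`. For independence let `t` span the socle of `A`. It kills `ker π`, and `ι t * C_{jB} ≠ 0`
because, counting degrees with `jC = jA + jB`, the socle of `C` lies in `ι(A_{jA}) C_{jB}`; with
Poincaré duality in `B` this makes `u ↦ ι t * u` injective on `k`-combinations of the `c i` of a
fixed degree. A homogeneous `A`-relation among the `c i`, multiplied by an element turning the
coefficient of a `c i` of maximal degree into `t`, collapses to such a combination.
-/

open DirectSum

section

variable {A C B : Type*} [CommRing A] [CommRing C] [CommRing B]
  [Algebra k A] [Algebra k C] [Algebra k B]
  {𝒜 : ℕ → Submodule k A} {𝒞 : ℕ → Submodule k C} {ℬ : ℕ → Submodule k B}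

namespace IsPoincareDuality

variable {j : ℕ}

theorem eq_zero_of_lt (h : IsPoincareDuality 𝒜 j) {i : ℕ} (hi : j < i) {a : A} (ha : a ∈ 𝒜 i) :
    a = 0 := by
  rw [h.2.1 i hi] at ha
  exact (Submodule.mem_bot k).mp ha

theorem exists_ne_zero (h : IsPoincareDuality 𝒜 j) : ∃ a ∈ 𝒜 j, a ≠ 0 := by
  obtain ⟨⟨a, ha⟩, ha0, -⟩ := finrank_eq_one_iff'.mp h.1
  exact ⟨a, ha, fun h0 => ha0 (Subtype.ext h0)⟩

theorem exists_smul_eq (h : IsPoincareDuality 𝒜 j) {t : A} (ht : t ∈ 𝒜 j) (ht0 : t ≠ 0)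
    {a : A} (ha : a ∈ 𝒜 j) : ∃ ν : k, a = ν • t := by
  obtain ⟨ν, hν⟩ := (finrank_eq_one_iff_of_nonzero' (⟨t, ht⟩ : 𝒜 j)
    fun h0 => ht0 (congrArg Subtype.val h0)).mp h.1 ⟨a, ha⟩
  exact ⟨ν, (congrArg Subtype.val hν).symm⟩

theorem exists_mul_ne_zero (h : IsPoincareDuality 𝒜 j) {i : ℕ} {a : A} (ha : a ∈ 𝒜 i)
    (ha0 : a ≠ 0) : i ≤ j ∧ ∃ b ∈ 𝒜 (j - i), a * b ≠ 0 := by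
  have hij : i ≤ j := not_lt.mp fun hlt => ha0 (h.eq_zero_of_lt hlt ha)
  exact ⟨hij, h.2.2 i hij a ha ha0⟩

end IsPoincareDuality

theorem AlgHom.mem_of_map_le {f : A →ₐ[k] C} (hf : ∀ i, (𝒜 i).map f.toLinearMap ≤ 𝒞 i) {i : ℕ}
    {a : A} (ha : a ∈ 𝒜 i) : f a ∈ 𝒞 i :=
  hf i ⟨a, ha, rfl⟩

theorem coe_decompose_algHom [GradedAlgebra 𝒜] [GradedAlgebra 𝒞] {f : A →ₐ[k] C}
    (hf : ∀ i, (𝒜 i).map f.toLinearMap ≤ 𝒞 i) (a : A) (i : ℕ) :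
    (decompose 𝒞 (f a) i : C) = f (decompose 𝒜 a i) :=
  (map_directSumDecompose (F := 𝒜 →+*ᵍ 𝒞) 𝒜 𝒞
    ⟨f.toRingHom, fun ha => f.mem_of_map_le hf ha⟩).symm

theorem exists_mem_eq_of_surjective [GradedAlgebra 𝒞] [GradedAlgebra ℬ] {π : C →ₐ[k] B}
    (hπ : ∀ i, (𝒞 i).map π.toLinearMap ≤ ℬ i) (hsurj : Function.Surjective π) {n : ℕ} {y : B}
    (hy : y ∈ ℬ n) : ∃ x ∈ 𝒞 n, π x = y := by
  obtain ⟨x, rfl⟩ := hsurj y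
  exact ⟨decompose 𝒞 x n, (decompose 𝒞 x n).2,
    by rw [← coe_decompose_algHom hπ, decompose_of_mem_same ℬ hy]⟩

theorem coe_decompose_algHom_mul [GradedAlgebra 𝒜] [GradedAlgebra 𝒞] {ι : A →ₐ[k] C}
    (hι : ∀ i, (𝒜 i).map ι.toLinearMap ≤ 𝒞 i) (a : A) {x : C} {n : ℕ} (hx : x ∈ 𝒞 n) (d : ℕ) :
    (decompose 𝒞 (ι a * x) d : C) = if n ≤ d then ι (decompose 𝒜 a (d - n)) * x else 0 := by
  split_ifs with hnd
  · rw [coe_decompose_mul_of_right_mem_of_le 𝒞 hx hnd, coe_decompose_algHom hι]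
  · exact coe_decompose_mul_of_right_mem_of_not_le 𝒞 hx hnd

theorem coe_decompose_mem_span_of_mem_ideal [GradedAlgebra 𝒞] {ι : A →ₐ[k] C}
    (hι : ∀ i, (𝒜 i).map ι.toLinearMap ≤ 𝒞 i) {z : C}
    (hz : z ∈ Ideal.span (ι '' {a | ∃ i, 0 < i ∧ a ∈ 𝒜 i})) (n : ℕ) :
    (decompose 𝒞 z n : C) ∈
      Submodule.span k {w | ∃ m, 0 < m ∧ m ≤ n ∧ ∃ a ∈ 𝒜 m, ∃ y ∈ 𝒞 (n - m), w = ι a * y} := by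
  obtain ⟨f, hf, rfl⟩ := Submodule.mem_span_set.mp hz
  rw [Finsupp.sum, decompose_sum, DFinsupp.finsetSum_apply, Submodule.coe_sum]
  refine Submodule.sum_mem _ fun x hx => ?_
  obtain ⟨a, ⟨m, hm, ha⟩, rfl⟩ := hf hx
  rw [smul_eq_mul]
  by_cases hmn : m ≤ n
  · rw [coe_decompose_mul_of_right_mem_of_le 𝒞 (ι.mem_of_map_le hι ha) hmn, mul_comm]
    exact Submodule.subset_span ⟨m, hm, hmn, a, ha, _, (decompose 𝒞 (f (ι a)) (n - m)).2, rfl⟩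
  · rw [coe_decompose_mul_of_right_mem_of_not_le 𝒞 (ι.mem_of_map_le hι ha) hmn]
    exact zero_mem _

theorem mul_eq_zero_of_mem_ideal [SetLike.GradedMonoid 𝒜] {jA : ℕ}
    (hA : IsPoincareDuality 𝒜 jA) {ι : A →ₐ[k] C} {t : A} (ht : t ∈ 𝒜 jA) {z : C}
    (hz : z ∈ Ideal.span (ι '' {a | ∃ i, 0 < i ∧ a ∈ 𝒜 i})) : ι t * z = 0 := by
  have hann : Ideal.span (ι '' {a | ∃ i, 0 < i ∧ a ∈ 𝒜 i}) ≤ (Ideal.span {ι t}).annihilator := by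
    refine Ideal.span_le.mpr ?_
    rintro _ ⟨a, ⟨i, hi, ha⟩, rfl⟩
    rw [SetLike.mem_coe, Submodule.mem_annihilator_span_singleton, smul_eq_mul, ← map_mul,
      hA.eq_zero_of_lt (by omega) (SetLike.mul_mem_graded ha ht), map_zero]
  rw [mul_comm, ← smul_eq_mul]
  exact (Submodule.mem_annihilator_span_singleton _ _).mp (hann hz)

theorem mul_ne_zero_of_map_ne_zero [GradedAlgebra 𝒞] [GradedAlgebra ℬ] {jB : ℕ}
    (hB : IsPoincareDuality ℬ jB) {π : C →ₐ[k] B} (hπ : ∀ i, (𝒞 i).map π.toLinearMap ≤ ℬ i)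
    (hsurj : Function.Surjective π) {s : C} (hs : ∀ z, π z = 0 → s * z = 0) {w : C}
    (hw : w ∈ 𝒞 jB) (hsw : s * w ≠ 0) {n : ℕ} {u : C} (hu : u ∈ 𝒞 n) (hπu : π u ≠ 0) :
    s * u ≠ 0 := by
  obtain ⟨hn, b, hb, hub⟩ := hB.exists_mul_ne_zero (π.mem_of_map_le hπ hu) hπu
  obtain ⟨v, hv, rfl⟩ := exists_mem_eq_of_surjective hπ hsurj hb
  have huv : u * v ∈ 𝒞 jB := by
    simpa [Nat.add_sub_cancel' hn] using SetLike.mul_mem_graded hu hv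
  obtain ⟨ν, hν⟩ := hB.exists_smul_eq (π.mem_of_map_le hπ huv) (by rwa [map_mul])
    (π.mem_of_map_le hπ hw)
  have hker : s * (w - ν • (u * v)) = 0 := hs _ (by rw [map_sub, map_smul, hν, sub_self])
  rw [mul_sub, sub_eq_zero, mul_smul_comm, ← mul_assoc] at hker
  intro hsu
  rw [hsu, zero_mul, smul_zero] at hker
  exact hsw hker

section Lift

variable {α : Type*} (ι : A →ₐ[k] C) (𝒜) (c : α → C) (deg : α → ℕ)

/-- The degree-`n` part of the `A`-submodule of `C` generated by the family `c`, whose member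
`c i` is homogeneous of degree `deg i`. -/
def gradedSpan (n : ℕ) : Submodule k C :=
  Submodule.span k {x | ∃ i m, m + deg i = n ∧ ∃ a ∈ 𝒜 m, x = ι a * c i}

variable {ι 𝒜 c deg}

theorem mul_mem_gradedSpan [SetLike.GradedMonoid 𝒜] {a : A} {m n : ℕ} (ha : a ∈ 𝒜 m) {x : C}
    (hx : x ∈ gradedSpan 𝒜 ι c deg n) : ι a * x ∈ gradedSpan 𝒜 ι c deg (m + n) := by
  induction hx using Submodule.span_induction with
  | mem x hx =>
    obtain ⟨i, m', hm', a', ha', rfl⟩ := hx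
    exact Submodule.subset_span
      ⟨i, m + m', by omega, a * a', SetLike.mul_mem_graded ha ha', by rw [map_mul, mul_assoc]⟩
  | zero => simp
  | add x y _ _ hx hy => rw [mul_add]; exact add_mem hx hy
  | smul μ x _ hx => rw [mul_smul_comm]; exact Submodule.smul_mem _ μ hx

theorem le_gradedSpan [SetLike.GradedMonoid 𝒜] [GradedAlgebra 𝒞]
    (hι : ∀ i, (𝒜 i).map ι.toLinearMap ≤ 𝒞 i) (hc : ∀ i, c i ∈ 𝒞 (deg i))
    (hlift : ∀ n, ∀ x ∈ 𝒞 n, ∃ y ∈ Submodule.span k (c '' {i | deg i = n}),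
      x - y ∈ Ideal.span (ι '' {a | ∃ i, 0 < i ∧ a ∈ 𝒜 i})) (n : ℕ) :
    𝒞 n ≤ gradedSpan 𝒜 ι c deg n := by
  induction n using Nat.strong_induction_on with
  | _ n ih =>
  intro x hx
  obtain ⟨y, hy, hxy⟩ := hlift n x hx
  have hyC : y ∈ 𝒞 n := Submodule.span_le.mpr (by rintro _ ⟨i, rfl, rfl⟩; exact hc i) hy
  have hyS : y ∈ gradedSpan 𝒜 ι c deg n := by
    refine Submodule.span_mono ?_ hy
    rintro _ ⟨i, rfl, rfl⟩
    exact ⟨i, 0, zero_add _, 1, SetLike.GradedOne.one_mem, by rw [map_one, one_mul]⟩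
  have hxyS : x - y ∈ gradedSpan 𝒜 ι c deg n := by
    have h := coe_decompose_mem_span_of_mem_ideal hι hxy n
    rw [decompose_of_mem_same 𝒞 (sub_mem hx hyC)] at h
    refine Submodule.span_le.mpr ?_ h
    rintro _ ⟨m, hm, hmn, a, ha, z, hz, rfl⟩
    simpa [Nat.add_sub_cancel' hmn] using mul_mem_gradedSpan ha (ih (n - m) (by omega) hz)
  simpa using add_mem hxyS hyS

theorem span_range_eq_top [Module A C] (hsmul : ∀ (a : A) (x : C), a • x = ι a * x)
    [DirectSum.Decomposition 𝒞] (hgen : ∀ n, 𝒞 n ≤ gradedSpan 𝒜 ι c deg n) :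
    Submodule.span A (Set.range c) = ⊤ := by
  classical
  have hS : ∀ n, (gradedSpan 𝒜 ι c deg n : Set C) ⊆ Submodule.span A (Set.range c) := by
    intro n x hx
    induction hx using Submodule.span_induction with
    | mem x hx =>
      obtain ⟨i, m, -, a, -, rfl⟩ := hx
      rw [← hsmul]
      exact Submodule.smul_mem _ a (Submodule.subset_span ⟨i, rfl⟩)
    | zero => exact zero_mem _
    | add x y _ _ hx hy => exact add_mem hx hy
    | smul μ x _ hx =>
      rw [SetLike.mem_coe, Algebra.smul_def, ← ι.commutes, ← hsmul]
      exact Submodule.smul_mem _ _ hx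
  refine eq_top_iff.mpr fun x _ => ?_
  rw [← sum_support_decompose 𝒞 x]
  exact Submodule.sum_mem _ fun n _ => hS n (hgen n (decompose 𝒞 x n).2)

theorem gradedSpan_add_le_map_mulLeft {jA jB : ℕ} (hA : IsPoincareDuality 𝒜 jA)
    (hc : ∀ i, c i ∈ 𝒞 (deg i)) (hdeg : ∀ i, deg i ≤ jB) {t : A} (ht : t ∈ 𝒜 jA) (ht0 : t ≠ 0) :
    gradedSpan 𝒜 ι c deg (jA + jB) ≤ (𝒞 jB).map (LinearMap.mulLeft k (ι t)) := by
  refine Submodule.span_le.mpr ?_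
  rintro _ ⟨i, m, hm, a, ha, rfl⟩
  rcases (hdeg i).lt_or_eq with hlt | heq
  · rw [hA.eq_zero_of_lt (by omega) ha, map_zero, zero_mul]
    exact zero_mem _
  · obtain ⟨ν, rfl⟩ := hA.exists_smul_eq ht ht0 (show m = jA by omega ▸ ha)
    exact ⟨ν • c i, Submodule.smul_mem _ ν (heq ▸ hc i), by simp⟩

theorem linearIndepOn_mul (π : C →ₐ[k] B) (hc : ∀ i, c i ∈ 𝒞 (deg i))
    (hπc : LinearIndependent k (π ∘ c)) {s : C} (hs : ∀ n, ∀ u ∈ 𝒞 n, π u ≠ 0 → s * u ≠ 0)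
    (n : ℕ) : LinearIndepOn k (fun i => s * c i) {i | deg i = n} := by
  rw [linearIndepOn_iff']
  intro F g hF hg
  have hsum : π (∑ i ∈ F, g i • c i) = 0 := by
    by_contra h
    refine hs n _ (Submodule.sum_mem _ fun i hi => Submodule.smul_mem _ _ ?_) h ?_
    · exact (hF hi : deg i = n) ▸ hc i
    · simpa [Finset.mul_sum, mul_smul_comm] using hg
  simp only [map_sum, map_smul] at hsum
  exact linearIndependent_iff'.mp hπc F g hsum

theorem eq_zero_of_homogeneous_sum_eq_zero [SetLike.GradedMonoid 𝒜] {jA : ℕ}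
    (hA : IsPoincareDuality 𝒜 jA)
    (hind : ∀ t ∈ 𝒜 jA, t ≠ 0 → ∀ n, LinearIndepOn k (fun i => ι t * c i) {i | deg i = n})
    {s : Finset α} {a : α → A} {e : α → ℕ} {d : ℕ} (ha : ∀ i ∈ s, a i ∈ 𝒜 (e i))
    (hd : ∀ i ∈ s, e i + deg i = d) (hsum : ∑ i ∈ s, ι (a i) * c i = 0) : ∀ i ∈ s, a i = 0 := by
  classical
  by_contra! ⟨i₁, hi₁, hne⟩
  obtain ⟨i₀, hi₀, hmax⟩ := (s.filter (a · ≠ 0)).exists_max_image deg ⟨i₁, by simp [hi₁, hne]⟩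
  rw [Finset.mem_filter] at hi₀
  obtain ⟨he, b, hb, hab⟩ := hA.exists_mul_ne_zero (ha i₀ hi₀.1) hi₀.2
  have ht : a i₀ * b ∈ 𝒜 jA := by
    simpa [Nat.add_sub_cancel' he] using SetLike.mul_mem_graded (ha i₀ hi₀.1) hb
  -- `a i * b` has degree `e i + (jA - e i₀)`, which exceeds `jA` when `deg i < deg i₀`
  have hcoef : ∀ i ∈ s, ∃ ν : k, a i * b = ν • (a i₀ * b) ∧ (deg i ≠ deg i₀ → ν = 0) := by
    intro i hi
    have hab' := SetLike.mul_mem_graded (ha i hi) hb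
    have hdi := hd i hi
    have hdi₀ := hd i₀ hi₀.1
    by_cases hdeg : deg i = deg i₀
    · obtain ⟨ν, hν⟩ := hA.exists_smul_eq ht hab (show e i + (jA - e i₀) = jA by omega ▸ hab')
      exact ⟨ν, hν, fun h => absurd hdeg h⟩
    · refine ⟨0, ?_, fun _ => rfl⟩
      by_cases hai : a i = 0
      · simp [hai]
      · have : deg i < deg i₀ := lt_of_le_of_ne (hmax i (by simp [hi, hai])) hdeg
        rw [zero_smul]
        exact hA.eq_zero_of_lt (by omega) hab'
  choose! ν hν hν0 using hcoef
  have hrel : ∑ i ∈ s.filter (deg · = deg i₀), ν i • (ι (a i₀ * b) * c i) = 0 := by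
    rw [Finset.sum_filter_of_ne fun i hi h => by_contra fun hdeg => h (by simp [hν0 i hi hdeg])]
    calc ∑ i ∈ s, ν i • (ι (a i₀ * b) * c i) = ι b * ∑ i ∈ s, ι (a i) * c i := by
          rw [Finset.mul_sum]
          refine Finset.sum_congr rfl fun i hi => ?_
          rw [← smul_mul_assoc, ← map_smul, ← hν i hi, map_mul]
          ring
      _ = 0 := by rw [hsum, mul_zero]
  have hν₀ := linearIndepOn_iff'.mp (hind _ ht hab (deg i₀)) _ ν (by intro i; simp) hrel i₀
    (by simp [hi₀.1])
  exact hab (by rw [hν i₀ hi₀.1, hν₀, zero_smul])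

theorem linearIndependent_of_isPoincareDuality [Module A C]
    (hsmul : ∀ (a : A) (x : C), a • x = ι a * x) [GradedAlgebra 𝒜] [GradedAlgebra 𝒞]
    (hι : ∀ i, (𝒜 i).map ι.toLinearMap ≤ 𝒞 i) (hc : ∀ i, c i ∈ 𝒞 (deg i)) {jA : ℕ}
    (hA : IsPoincareDuality 𝒜 jA)
    (hind : ∀ t ∈ 𝒜 jA, t ≠ 0 → ∀ n, LinearIndepOn k (fun i => ι t * c i) {i | deg i = n}) :
    LinearIndependent A c := by
  classical
  rw [linearIndependent_iff']
  intro s g hg i₀ hi₀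
  have hrel : ∑ i ∈ s, ι (g i) * c i = 0 := by simpa only [hsmul] using hg
  have hcomp : ∀ m, (decompose 𝒜 (g i₀) m : A) = 0 := by
    intro m
    set d := m + deg i₀
    have hsum : ∑ i ∈ s.filter (deg · ≤ d), ι (decompose 𝒜 (g i) (d - deg i)) * c i = 0 := by
      rw [Finset.sum_filter]
      calc _ = (decompose 𝒞 (∑ i ∈ s, ι (g i) * c i) d : C) := by
            rw [decompose_sum, DFinsupp.finsetSum_apply, Submodule.coe_sum]
            exact Finset.sum_congr rfl fun i _ => (coe_decompose_algHom_mul hι _ (hc i) d).symm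
        _ = 0 := by rw [hrel, decompose_zero]; rfl
    have h : (decompose 𝒜 (g i₀) (d - deg i₀) : A) = 0 :=
      eq_zero_of_homogeneous_sum_eq_zero hA hind (e := fun i => d - deg i)
        (fun i _ => (decompose 𝒜 (g i) _).2)
        (fun i hi => Nat.sub_add_cancel (Finset.mem_filter.mp hi).2) hsum i₀ (by simp [hi₀, d])
    rwa [show d - deg i₀ = m by omega] at h
  rw [← sum_support_decompose 𝒜 (g i₀)]
  exact Finset.sum_eq_zero fun m _ => hcomp m

end Lift

theorem exists_lift_basis [GradedAlgebra 𝒞] [GradedAlgebra ℬ] {π : C →ₐ[k] B}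
    (hπ : ∀ i, (𝒞 i).map π.toLinearMap ≤ ℬ i) (hsurj : Function.Surjective π) :
    ∃ c : (Σ n, Module.Basis.ofVectorSpaceIndex k (ℬ n)) → C, (∀ i, c i ∈ 𝒞 i.1) ∧
      LinearIndependent k (π ∘ c) ∧
      ∀ n, ∀ x ∈ 𝒞 n, ∃ y ∈ Submodule.span k (c '' {i | i.1 = n}), π x = π y := by
  classical
  have hB := Decomposition.isInternal ℬ
  let b := hB.collectedBasis fun n => Module.Basis.ofVectorSpace k (ℬ n)
  choose c hc hπc using fun i => exists_mem_eq_of_surjective hπ hsurj (hB.collectedBasis_mem _ i)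
  refine ⟨c, hc, ?_, fun n x hx => ?_⟩
  · convert b.linearIndependent
    exact funext hπc
  · have hx' : π x ∈ Submodule.span k (π.toLinearMap '' (c '' {i | i.1 = n})) := by
      have h := Submodule.mem_map_of_mem (f := (ℬ n).subtype)
        ((Module.Basis.ofVectorSpace k (ℬ n)).mem_span ⟨π x, π.mem_of_map_le hπ hx⟩)
      rw [Submodule.map_span, ← Set.range_comp] at h
      refine Submodule.span_mono ?_ h
      rintro _ ⟨j, rfl⟩
      exact ⟨c ⟨n, j⟩, ⟨⟨n, j⟩, rfl, rfl⟩,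
        (hπc ⟨n, j⟩).trans (congrFun (hB.collectedBasis_coe _) _)⟩
    obtain ⟨y, hy, hxy⟩ := (Submodule.span_image π.toLinearMap ▸ hx' :)
    exact ⟨y, hy, hxy.symm⟩

end

theorem lemma_SS_general {A C B : Type*} [CommRing A] [CommRing C] [CommRing B]
    [Algebra k A] [Algebra k C] [Algebra k B]
    (𝒜 : ℕ → Submodule k A) (𝒞 : ℕ → Submodule k C) (ℬ : ℕ → Submodule k B)
    [GradedAlgebra 𝒜] [GradedAlgebra 𝒞] [GradedAlgebra ℬ]
    (jA jC jB : ℕ)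
    (hPDA : IsPoincareDuality 𝒜 jA) (hPDC : IsPoincareDuality 𝒞 jC)
    (hPDB : IsPoincareDuality ℬ jB)
    (hsocle : jC = jA + jB)
    -- graded algebra homomorphisms ι : A → C and π : C → B
    (ι : A →ₐ[k] C) (hιgr : ∀ i, (𝒜 i).map ι.toLinearMap ≤ 𝒞 i)
    (π : C →ₐ[k] B) (hπgr : ∀ i, (𝒞 i).map π.toLinearMap ≤ ℬ i)
    -- coexactness: π is surjective and ker π = (ι(A_+))·C
    (hsurj : Function.Surjective π)
    (hker : RingHom.ker π = Ideal.span (⇑ι '' {a | ∃ i, 0 < i ∧ a ∈ 𝒜 i})) :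
    freeVia ι.toRingHom := by
  let _ : Module A C := Module.compHom C ι.toRingHom
  obtain ⟨c, hc, hπc, hlift⟩ := exists_lift_basis hπgr hsurj
  have hgen : ∀ n, 𝒞 n ≤ gradedSpan 𝒜 ι c Sigma.fst n := by
    refine le_gradedSpan hιgr hc fun n x hx => ?_
    obtain ⟨y, hy, hxy⟩ := hlift n x hx
    exact ⟨y, hy, hker ▸ RingHom.mem_ker.mpr (by rw [map_sub, hxy, sub_self])⟩
  have hdeg : ∀ i, Sigma.fst i ≤ jB := fun i =>
    not_lt.mp fun h => hπc.ne_zero i (hPDB.eq_zero_of_lt h (π.mem_of_map_le hπgr (hc i)))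
  have hind : ∀ t ∈ 𝒜 jA, t ≠ 0 → ∀ n,
      LinearIndepOn k (fun i => ι t * c i) {i | Sigma.fst i = n} := by
    intro t ht ht0
    obtain ⟨z, hz, hz0⟩ := hPDC.exists_ne_zero
    obtain ⟨w, hw, rfl⟩ :=
      gradedSpan_add_le_map_mulLeft hPDA hc hdeg ht ht0 (hgen _ (hsocle ▸ hz))
    have hkill : ∀ z, π z = 0 → ι t * z = 0 := fun z hz =>
      mul_eq_zero_of_mem_ideal hPDA ht (hker ▸ RingHom.mem_ker.mpr hz)
    exact linearIndepOn_mul π hc hπc fun n u hu hπu =>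
      mul_ne_zero_of_map_ne_zero hPDB hπgr hsurj hkill hw hz0 hu hπu
  exact Module.Free.of_basis (Module.Basis.mk
    (linearIndependent_of_isPoincareDuality (fun _ _ => rfl) hιgr hc hPDA hind)
    (span_range_eq_top (fun _ _ => rfl) hgen).ge)

/-- Lemma 3.3 ([MeSm, Lemma VI.4.11]).  Let `k → A → C → B → k` be a coexact sequence of
Poincaré duality algebras (i.e. `π` is surjective and `ker π` is the ideal of `C`
generated by `ι(A_+)`) whose socle degrees satisfy `j_C = j_A + j_B`.  Then `C` is a
free `A`-module via `ι`. -/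
theorem lemma_SS {A C B : Type*} [CommRing A] [CommRing C] [CommRing B]
    [Algebra k A] [Algebra k C] [Algebra k B]
    (𝒜 : ℕ → Submodule k A) (𝒞 : ℕ → Submodule k C) (ℬ : ℕ → Submodule k B)
    [GradedAlgebra 𝒜] [GradedAlgebra 𝒞] [GradedAlgebra ℬ]
    [FiniteDimensional k A] [FiniteDimensional k C] [FiniteDimensional k B]
    (hA0 : 𝒜 0 = 1) (hC0 : 𝒞 0 = 1) (hB0 : ℬ 0 = 1)
    (jA jC jB : ℕ)
    (hPDA : IsPoincareDuality 𝒜 jA) (hPDC : IsPoincareDuality 𝒞 jC)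
    (hPDB : IsPoincareDuality ℬ jB)
    (hsocle : jC = jA + jB)
    -- graded algebra homomorphisms ι : A → C and π : C → B
    (ι : A →ₐ[k] C) (hιgr : ∀ i, (𝒜 i).map ι.toLinearMap ≤ 𝒞 i)
    (π : C →ₐ[k] B) (hπgr : ∀ i, (𝒞 i).map π.toLinearMap ≤ ℬ i)
    -- coexactness: π is surjective and ker π = (ι(A_+))·C
    (hsurj : Function.Surjective π)
    (hker : RingHom.ker π = Ideal.span (⇑ι '' {a | ∃ i, 0 < i ∧ a ∈ 𝒜 i})) :
    freeVia ι.toRingHom :=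
  lemma_SS_general 𝒜 𝒞 ℬ jA jC jB hPDA hPDC hPDB hsocle ι hιgr π hπgr hsurj hker

end
end

section
/- Let A, B, C be finite-dimensional graded k-algebras with A_0 = B_0 = C_0 = k, and let ι : A → C and π : C → B be graded algebra homomorphisms with π surjective. Then the following are equivalent: (iii) ι makes C a free A-module and ker π equals the ideal of C generated by ι(A_+); (iv) ker π equals the ideal of C generated by ι(A_+) and dim_k C = (dim_k A)·(dim_k B). -/
noncomputable section

variable {k : Type*} [Field k]

/-!
Let `J ⊆ A` be the irrelevant ideal. Homogeneous elements of positive degree are nilpotent in the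
finite-dimensional algebra `A`, so `J` lies in the Jacobson radical, and `A_0 = k` gives
`A ⧸ J = k`. As `ker π = J C`, `B ≅ C ⧸ J C`. By Nakayama, a `k`-basis of `C ⧸ J C` lifts to
`dim B` generators of `C` over `A`, so `dim C ≤ dim A · dim B`, with equality exactly when these
generators are free. Conversely, an `A`-basis of `C` spans `C ⧸ J C` over `A ⧸ J = k`, so its size
is at least `dim B`, which forces equality.
-/

open Module Submodule

section QuotientSmulTop

variable {A M : Type*} [CommRing A] [Algebra k A] [AddCommGroup M] [Module A M]
  [Module k M] [IsScalarTower k A M] {J : Ideal A}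

theorem exists_smul_eq_smul_of_surjective_algebraMap_quotient
    (hk : Function.Surjective (algebraMap k (A ⧸ J))) (a : A) :
    ∃ c : k, ∀ q : M ⧸ (J • ⊤ : Submodule A M), a • q = c • q := by
  obtain ⟨c, hc⟩ := hk (Ideal.Quotient.mk J a)
  have hac : a - algebraMap k A c ∈ J := by
    rw [← Ideal.Quotient.eq, ← hc]
    rfl
  refine ⟨c, fun q => Submodule.Quotient.induction_on _ q fun m => ?_⟩
  rw [← sub_eq_zero, ← algebraMap_smul A c, ← Submodule.Quotient.mk_smul,
    ← Submodule.Quotient.mk_smul, ← Submodule.Quotient.mk_sub, ← sub_smul,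
    Submodule.Quotient.mk_eq_zero]
  exact smul_mem_smul hac mem_top

theorem span_range_mkQ_eq_top (hk : Function.Surjective (algebraMap k (A ⧸ J)))
    {ι : Type*} {v : ι → M} (hv : span A (Set.range v) = ⊤) :
    span k (Set.range ((J • ⊤ : Submodule A M).mkQ ∘ v)) = ⊤ := by
  refine eq_top_iff.mpr fun q _ => Submodule.Quotient.induction_on _ q fun m => ?_
  have hm : m ∈ span A (Set.range v) := hv ▸ mem_top
  induction hm using span_induction with
  | mem x hx =>
    obtain ⟨i, rfl⟩ := hx
    exact subset_span ⟨i, rfl⟩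
  | zero => exact zero_mem _
  | add x y _ _ hx hy => exact add_mem hx hy
  | smul a x _ hx =>
    obtain ⟨c, hc⟩ := exists_smul_eq_smul_of_surjective_algebraMap_quotient (M := M) hk a
    rw [Submodule.Quotient.mk_smul, hc]
    exact smul_mem _ c hx

theorem span_eq_top_of_span_range_mkQ_eq_top (hJ : J ≤ Ideal.jacobson ⊥) [Module.Finite A M]
    {ι : Type*} {v : ι → M} (hv : span k (Set.range ((J • ⊤ : Submodule A M).mkQ ∘ v)) = ⊤) :
    span A (Set.range v) = ⊤ := by
  refine top_le_iff.mp (le_of_le_smul_of_le_jacobson_bot (Module.finite_def.mp ‹_›) hJ ?_)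
  rw [top_le_iff, sup_comm, ← map_mkQ_eq_top, map_span, ← Set.range_comp, eq_top_iff]
  exact fun q _ => span_le_restrictScalars k A _ (hv.ge mem_top)

end QuotientSmulTop

theorem finrank_finsupp_eq_card_mul {A ι : Type*} [Ring A] [Algebra k A]
    [FiniteDimensional k A] [Fintype ι] :
    finrank k (ι →₀ A) = Fintype.card ι * finrank k A := by
  rw [(Finsupp.linearEquivFunOnFinite k A ι).finrank_eq, finrank_pi_fintype, Finset.sum_const,
    Finset.card_univ, smul_eq_mul]

section SpanningFamily

variable {A M : Type*} [CommRing A] [Algebra k A] [AddCommGroup M] [Module A M]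
  [Module k M] [IsScalarTower k A M] [FiniteDimensional k A]
  {ι : Type*} [Fintype ι] {v : ι → M}

theorem finrank_le_card_mul_finrank_of_span_eq_top (hv : span A (Set.range v) = ⊤) :
    finrank k M ≤ Fintype.card ι * finrank k A := by
  have hsurj : Function.Surjective (Finsupp.linearCombination A v) :=
    LinearMap.range_eq_top.mp (by rw [Finsupp.range_linearCombination, hv])
  rw [← finrank_finsupp_eq_card_mul]
  exact LinearMap.finrank_le_finrank_of_surjective
    (f := (Finsupp.linearCombination A v).restrictScalars k) hsurj

theorem linearIndependent_of_span_eq_top_of_finrank_eq [FiniteDimensional k M]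
    (hv : span A (Set.range v) = ⊤) (hM : finrank k M = Fintype.card ι * finrank k A) :
    LinearIndependent A v := by
  have hsurj : Function.Surjective (Finsupp.linearCombination A v) :=
    LinearMap.range_eq_top.mp (by rw [Finsupp.range_linearCombination, hv])
  exact (LinearMap.injective_iff_surjective_of_finrank_eq_finrank
    (by rw [finrank_finsupp_eq_card_mul, hM])
    (f := (Finsupp.linearCombination A v).restrictScalars k)).mpr hsurj

end SpanningFamily

theorem free_iff_finrank_eq_mul_finrank_quotient_smul_top {A M : Type*} [CommRing A]
    [Algebra k A] [AddCommGroup M] [Module A M] [Module k M] [IsScalarTower k A M]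
    [FiniteDimensional k A] [FiniteDimensional k M] {J : Ideal A} (hJ : J ≤ Ideal.jacobson ⊥)
    (hk : Function.Surjective (algebraMap k (A ⧸ J))) :
    Module.Free A M ↔ finrank k M = finrank k A * finrank k (M ⧸ (J • ⊤ : Submodule A M)) := by
  have : Module.Finite A M := Module.Finite.of_restrictScalars_finite k A M
  set Q := M ⧸ (J • ⊤ : Submodule A M)
  obtain ⟨v, hv⟩ : ∃ v : Fin (finrank k Q) → M, span A (Set.range v) = ⊤ := by
    let b := Module.finBasis k Q
    choose v hv using fun i => (J • ⊤ : Submodule A M).mkQ_surjective (b i)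
    refine ⟨v, span_eq_top_of_span_range_mkQ_eq_top (k := k) hJ ?_⟩
    rw [show (J • ⊤ : Submodule A M).mkQ ∘ v = b from funext hv, b.span_eq]
  have hle : finrank k M ≤ finrank k Q * finrank k A := by
    simpa using finrank_le_card_mul_finrank_of_span_eq_top (k := k) hv
  constructor
  · intro hfree
    let b := Module.Free.chooseBasis A M
    have hM : finrank k M = Fintype.card (Module.Free.ChooseBasisIndex A M) * finrank k A := by
      rw [(b.repr.restrictScalars k).finrank_eq, finrank_finsupp_eq_card_mul]
    have hQ : finrank k Q ≤ Fintype.card (Module.Free.ChooseBasisIndex A M) := by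
      have := finrank_range_le_card (R := k) ((J • ⊤ : Submodule A M).mkQ ∘ b)
      rwa [Set.finrank, span_range_mkQ_eq_top hk b.span_eq, finrank_top] at this
    rw [mul_comm]
    exact le_antisymm hle (hM ▸ Nat.mul_le_mul_right _ hQ)
  · intro h
    have hv_indep : LinearIndependent A v :=
      linearIndependent_of_span_eq_top_of_finrank_eq hv (by rw [h, Fintype.card_fin, mul_comm])
    exact .of_basis (Basis.mk hv_indep hv.ge)

theorem isNilpotent_of_mem_graded_of_pos {A : Type*} [Ring A] [Algebra k A]
    (𝒜 : ℕ → Submodule k A) [GradedAlgebra 𝒜] [FiniteDimensional k A] {i : ℕ} (hi : 0 < i)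
    {a : A} (ha : a ∈ 𝒜 i) : IsNilpotent a := by
  by_contra h
  have hdeg : Function.Injective fun m : ℕ => (m + 1) * i :=
    (mul_left_injective₀ hi.ne').comp (add_left_injective 1)
  -- the powers of `a` lie in pairwise distinct degrees, hence are linearly independent
  have hli : LinearIndependent k fun m : ℕ => a ^ (m + 1) :=
    ((DirectSum.Decomposition.isInternal 𝒜).submodule_iSupIndep.comp hdeg).linearIndependent _
      (fun m => by simpa using SetLike.pow_mem_graded (m + 1) ha) fun m hm => h ⟨m + 1, hm⟩
  exact Module.Finite.not_linearIndependent_of_infinite _ hli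

section Irrelevant

variable {A : Type*} [CommRing A] [Algebra k A] (𝒜 : ℕ → Submodule k A) [GradedAlgebra 𝒜]

theorem irrelevant_le_jacobson_bot [FiniteDimensional k A] :
    (HomogeneousIdeal.irrelevant 𝒜).toIdeal ≤ Ideal.jacobson ⊥ := by
  rw [HomogeneousIdeal.irrelevant_eq_span, Ideal.span_le]
  simp only [Set.iUnion_subset_iff]
  intro i hi a ha
  exact Ideal.radical_le_jacobson (mem_nilradical.mpr (isNilpotent_of_mem_graded_of_pos 𝒜 hi ha))

theorem surjective_algebraMap_quotient_irrelevant (h0 : 𝒜 0 = 1) :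
    Function.Surjective (algebraMap k (A ⧸ (HomogeneousIdeal.irrelevant 𝒜).toIdeal)) := by
  refine Ideal.Quotient.mk_surjective.forall.mpr fun a => ?_
  have ha₀ : (DirectSum.decompose 𝒜 a 0 : A) ∈ (1 : Submodule k A) := h0 ▸ SetLike.coe_mem _
  obtain ⟨c, hc⟩ := Submodule.mem_one.mp ha₀
  refine ⟨c, ?_⟩
  rw [IsScalarTower.algebraMap_apply k A, hc, Ideal.Quotient.algebraMap_eq, Ideal.Quotient.eq,
    HomogeneousIdeal.toIdeal_irrelevant, RingHom.mem_ker, map_sub,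
    GradedRing.projZeroRingHom_apply, GradedRing.projZeroRingHom_apply,
    DirectSum.decompose_of_mem_same 𝒜 (SetLike.coe_mem _), sub_self]

end Irrelevant

theorem finrank_eq_finrank_quotient_smul_top_of_ker_eq {A C B : Type*} [CommRing A] [CommRing C]
    [CommRing B] [Algebra k A] [Algebra k C] [Algebra k B] [Algebra A C] [IsScalarTower k A C]
    {J : Ideal A} {π : C →ₐ[k] B} (hπ : Function.Surjective π)
    (hker : RingHom.ker π = J.map (algebraMap A C)) :
    finrank k B = finrank k (C ⧸ (J • ⊤ : Submodule A C)) := by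
  have hJ : (J • ⊤ : Submodule A C).restrictScalars k = (RingHom.ker π).restrictScalars k := by
    rw [Ideal.smul_top_eq_map, hker]
    rfl
  refine ((Ideal.quotientKerAlgEquivOfSurjective hπ).toLinearEquiv.symm ≪≫ₗ
    (Submodule.Quotient.restrictScalarsEquiv k _).symm ≪≫ₗ Submodule.quotEquivOfEq _ _ hJ.symm ≪≫ₗ
    Submodule.Quotient.restrictScalarsEquiv k _).finrank_eq

theorem coexact_free_iff_dim_general {A C B : Type*} [CommRing A] [CommRing C] [CommRing B]
    [Algebra k A] [Algebra k C] [Algebra k B]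
    (𝒜 : ℕ → Submodule k A)
    [GradedAlgebra 𝒜]
    [FiniteDimensional k A] [FiniteDimensional k C]
    (hA0 : 𝒜 0 = 1)
    -- graded algebra homomorphisms ι : A → C and π : C → B, with π surjective
    (ι : A →ₐ[k] C)
    (π : C →ₐ[k] B)
    (hsurj : Function.Surjective π) :
    (freeVia ι.toRingHom ∧
        RingHom.ker π = Ideal.span (⇑ι '' {a | ∃ i, 0 < i ∧ a ∈ 𝒜 i}))
      ↔ (RingHom.ker π = Ideal.span (⇑ι '' {a | ∃ i, 0 < i ∧ a ∈ 𝒜 i}) ∧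
        Module.finrank k C = Module.finrank k A * Module.finrank k B) := by
  let : Algebra A C := ι.toRingHom.toAlgebra
  have : IsScalarTower k A C := .of_algebraMap_eq fun c => (ι.commutes c).symm
  rw [and_comm, and_congr_right_iff]
  intro hker
  have hspan : Ideal.span (⇑ι '' {a | ∃ i, 0 < i ∧ a ∈ 𝒜 i}) =
      (HomogeneousIdeal.irrelevant 𝒜).toIdeal.map (algebraMap A C) := by
    rw [HomogeneousIdeal.irrelevant_eq_span, Ideal.map_span]
    congr 2
    ext a
    simp
  rw [finrank_eq_finrank_quotient_smul_top_of_ker_eq hsurj (hker.trans hspan)]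
  -- `freeVia ι.toRingHom` unfolds to `Module.Free A C` for the algebra structure above
  exact free_iff_finrank_eq_mul_finrank_quotient_smul_top (irrelevant_le_jacobson_bot 𝒜)
    (surjective_algebraMap_quotient_irrelevant 𝒜 hA0)

/-- Lemma 2.4 (iii) ⇔ (iv) ([IMM, Lemma 2.2]).  Let `A, B, C` be finite-dimensional graded
`k`-algebras with `A_0 = B_0 = C_0 = k`, and `ι : A → C`, `π : C → B` graded algebra maps
with `π` surjective.  Then: (`ι` makes `C` a free `A`-module and `ker π` is the ideal of
`C` generated by `ι(A_+)`) if and only if (`ker π` is the ideal of `C` generated by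
`ι(A_+)` and `dim_k C = (dim_k A)·(dim_k B)`). -/
theorem coexact_free_iff_dim {A C B : Type*} [CommRing A] [CommRing C] [CommRing B]
    [Algebra k A] [Algebra k C] [Algebra k B]
    (𝒜 : ℕ → Submodule k A) (𝒞 : ℕ → Submodule k C) (ℬ : ℕ → Submodule k B)
    [GradedAlgebra 𝒜] [GradedAlgebra 𝒞] [GradedAlgebra ℬ]
    [FiniteDimensional k A] [FiniteDimensional k C] [FiniteDimensional k B]
    (hA0 : 𝒜 0 = 1) (hC0 : 𝒞 0 = 1) (hB0 : ℬ 0 = 1)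
    -- graded algebra homomorphisms ι : A → C and π : C → B, with π surjective
    (ι : A →ₐ[k] C) (hιgr : ∀ i, (𝒜 i).map ι.toLinearMap ≤ 𝒞 i)
    (π : C →ₐ[k] B) (hπgr : ∀ i, (𝒞 i).map π.toLinearMap ≤ ℬ i)
    (hsurj : Function.Surjective π) :
    (freeVia ι.toRingHom ∧
        RingHom.ker π = Ideal.span (⇑ι '' {a | ∃ i, 0 < i ∧ a ∈ 𝒜 i}))
      ↔ (RingHom.ker π = Ideal.span (⇑ι '' {a | ∃ i, 0 < i ∧ a ∈ 𝒜 i}) ∧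
        Module.finrank k C = Module.finrank k A * Module.finrank k B) :=
  coexact_free_iff_dim_general 𝒜 hA0 ι π hsurj

end
end
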